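/- arXiv:1410.0424 — 7 statements merged into one kernel-verified Lean document; each statement's English description precedes it below -/
import Mathlib

section
/- Let S be a set of 8 points in the plane in general position, partitioned into two color classes R and B with |R| ≠ |B|. Then S contains a monochromatic empty triangle, i.e., three points of the same color whose triangle contains no point of S in its interior. -/
open scoped Classical

set_option maxHeartbeats 1000000

noncomputable section

/-- A planar point set is in general position if no three distinct points are collinear. -/
def GenPos (S : Set (ℝ × ℝ)) : Prop :=
  ∀ p ∈ S, ∀ q ∈ S, ∀ r ∈ S, p ≠ q → p ≠ r → q ≠ r →
    ¬ Collinear ℝ ({p, q, r} : Set (ℝ × ℝ))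

/-- Number of points of `S` strictly inside the triangle `a b c`. -/
def triPts (S : Finset (ℝ × ℝ)) (a b c : ℝ × ℝ) : ℕ :=
  (S.filter (fun p => p ∈ interior (convexHull ℝ ({a, b, c} : Set (ℝ × ℝ))))).card

/-- `S` (colored by `χ`) contains a monochromatic triangle with at most `s` interior points. -/
def MonoTriangle {c : ℕ} (S : Finset (ℝ × ℝ)) (χ : ℝ × ℝ → Fin c) (s : ℕ) : Prop :=
  ∃ a ∈ S, ∃ b ∈ S, ∃ d ∈ S, a ≠ b ∧ a ≠ d ∧ b ≠ d ∧
    χ a = χ b ∧ χ b = χ d ∧ triPts S a b d ≤ s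

/-!
Let `C` be the larger colour class, so `|C| ≥ 5` and `|D| ≤ 3` for the other one. Seen from a
point `v ∈ C`, each point of `C` together with its counterclockwise successor spans a triangle
at `v`; these fan triangles have pairwise disjoint interiors and contain no point of `C`, and
there are at least `|C| - 2` of them, at least `|C| - 1` if `v` is interior to `conv C`. So a
fan with more triangles than `D` has points contains an empty one. This disposes of every case
except `|C| = 5`, `|D| = 3` with no point of `C` interior to `conv C`; there, if every fan
triangle at some `v` meets `D`, each of the three points of `D` lies in one of them, so
`conv D ⊆ conv C`, and then the triangle `D` contains no point of `C` either.
-/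

theorem interior_convexHull_subset_of_le {E : Type*} [AddCommGroup E] [Module ℝ E]
    [TopologicalSpace E] [ContinuousAdd E] [ContinuousSMul ℝ E] {f : StrongDual ℝ E}
    (hf : f ≠ 0) {s : Set E} {c : ℝ} (hs : ∀ p ∈ s, c ≤ f p) :
    interior (convexHull ℝ s) ⊆ {z | c < f z} := by
  have hhull : convexHull ℝ s ⊆ f ⁻¹' Set.Ici c :=
    convexHull_min hs (convex_halfSpace_ge f.isLinear c)
  have himage : f '' interior (convexHull ℝ s) ⊆ interior (Set.Ici c) :=
    interior_maximal (Set.image_subset_iff.2 (interior_subset.trans hhull))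
      (f.isOpenMap_of_ne_zero hf _ isOpen_interior)
  rw [interior_Ici] at himage
  exact fun z hz => himage ⟨z, hz, rfl⟩

namespace Finset

variable {ι α : Type*} {I : Finset ι} {T : ι → Set α} {D : Finset α}

theorem card_le_card_of_forall_exists_mem (hT : (I : Set ι).PairwiseDisjoint T)
    (hD : ∀ i ∈ I, ∃ d ∈ D, d ∈ T i) : I.card ≤ D.card := by
  refine card_le_card_of_forall_subsingleton (fun i d => d ∈ T i) hD fun d _ i hi j hj =>
    hT.elim hi.1 hj.1 (Set.not_disjoint_iff.2 ⟨d, hi.2, hj.2⟩)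

theorem exists_mem_of_card_le (hT : (I : Set ι).PairwiseDisjoint T)
    (hD : ∀ i ∈ I, ∃ d ∈ D, d ∈ T i) (hcard : D.card ≤ I.card) :
    ∀ d ∈ D, ∃ i ∈ I, d ∈ T i := by
  intro d hd
  by_contra! h
  have := card_le_card_of_forall_exists_mem hT (D := D.erase d) fun i hi => by
    obtain ⟨d', hd', hd'T⟩ := hD i hi
    exact ⟨d', mem_erase.2 ⟨fun e => h i hi (e ▸ hd'T), hd'⟩, hd'T⟩
  have := card_erase_of_mem hd
  have := card_pos.2 ⟨d, hd⟩
  omega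

end Finset

namespace Plane

open Finset

abbrev Pt := ℝ × ℝ

def cross (u w : Pt) : ℝ := u.1 * w.2 - u.2 * w.1

@[simp]
theorem cross_self (u : Pt) : cross u u = 0 := by
  simp only [cross]; ring

@[simp]
theorem cross_zero_right (u : Pt) : cross u 0 = 0 := by
  simp [cross]

@[simp]
theorem cross_zero_left (u : Pt) : cross 0 u = 0 := by
  simp [cross]

theorem cross_neg_left (u w : Pt) : cross (-u) w = -cross u w := by
  simp only [cross, Prod.fst_neg, Prod.snd_neg]; ring

theorem cross_anticomm (u w : Pt) : cross u w = -cross w u := by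
  simp only [cross]; ring

theorem fst_sq_add_snd_sq_pos {u : Pt} (hu : u ≠ 0) : 0 < u.1 ^ 2 + u.2 ^ 2 := by
  rcases ne_or_eq u.1 0 with h | h
  · positivity
  · have : u.2 ≠ 0 := fun h2 => hu (Prod.ext h h2)
    positivity

theorem ne_of_cross_sub_pos {v a b : Pt} (h : 0 < cross (a - v) (b - v)) :
    v ≠ a ∧ v ≠ b ∧ a ≠ b := by
  refine ⟨?_, ?_, ?_⟩ <;> rintro rfl <;> simp at h

-- Grassmann–Plücker: `[w b][a c] = [w a][b c] + [w c][a b]`.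
theorem cross_pos_trans {w a b c : Pt} (hwa : 0 < cross w a) (hwb : 0 < cross w b)
    (hwc : 0 < cross w c) (hab : 0 < cross a b) (hbc : 0 < cross b c) : 0 < cross a c := by
  have key : cross w b * cross a c = cross w a * cross b c + cross w c * cross a b := by
    simp only [cross]; ring
  exact pos_of_mul_pos_right (key ▸ by positivity) hwb.le

theorem _root_.GenPos.mono {s t : Set (ℝ × ℝ)} (h : GenPos s) (hts : t ⊆ s) : GenPos t :=
  fun p hp q hq r hr => h p (hts hp) q (hts hq) r (hts hr)

theorem eq_smul_of_cross_eq_zero {u w : Pt} (hu : u ≠ 0) (h : cross u w = 0) :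
    w = ((u.1 * w.1 + u.2 * w.2) / (u.1 ^ 2 + u.2 ^ 2)) • u := by
  have hu' := (fst_sq_add_snd_sq_pos hu).ne'
  simp only [cross] at h
  ext <;> simp only [Prod.smul_fst, Prod.smul_snd, smul_eq_mul] <;> field_simp
  · linear_combination -u.2 * h
  · linear_combination u.1 * h

theorem _root_.GenPos.cross_ne_zero {s : Set Pt} (h : GenPos s) {a b c : Pt} (ha : a ∈ s)
    (hb : b ∈ s) (hc : c ∈ s) (hab : a ≠ b) (hac : a ≠ c) (hbc : b ≠ c) :
    cross (b - a) (c - a) ≠ 0 := by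
  intro h0
  refine h a ha b hb c hc hab hac hbc ((collinear_iff_of_mem (Set.mem_insert a _)).2 ?_)
  refine ⟨b - a, ?_⟩
  rintro p (rfl | rfl | rfl)
  · exact ⟨0, by simp⟩
  · exact ⟨1, by simp⟩
  · have := eq_smul_of_cross_eq_zero (sub_ne_zero.2 hab.symm) h0
    exact ⟨_, by rw [vadd_eq_add, ← this, sub_add_cancel]⟩

theorem cross_pos_of_mem_interior_convexHull {u v : Pt} (hu : u ≠ 0) {s : Set Pt}
    (hs : ∀ p ∈ s, 0 ≤ cross u (p - v)) {z : Pt} (hz : z ∈ interior (convexHull ℝ s)) :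
    0 < cross u (z - v) := by
  let f : StrongDual ℝ Pt :=
    u.1 • ContinuousLinearMap.snd ℝ ℝ ℝ - u.2 • ContinuousLinearMap.fst ℝ ℝ ℝ
  have hf : ∀ p, cross u (p - v) = f p - f v := fun p => by
    simp only [cross, f, Prod.fst_sub, Prod.snd_sub, sub_apply, smul_apply, smul_eq_mul,
      ContinuousLinearMap.coe_fst', ContinuousLinearMap.coe_snd']
    ring
  have hf0 : f ≠ 0 := fun h => by
    have : f (-u.2, u.1) = u.1 ^ 2 + u.2 ^ 2 := by
      simp only [f, sub_apply, smul_apply, smul_eq_mul, ContinuousLinearMap.coe_fst',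
        ContinuousLinearMap.coe_snd']
      ring
    rw [h, zero_apply] at this
    linarith [fst_sq_add_snd_sq_pos hu]
  have := interior_convexHull_subset_of_le hf0 (c := f v) (fun p hp => by
    linarith [hs p hp, hf p]) hz
  linarith [hf z, show f v < f z from this]

def cone (v a b : Pt) : Set Pt :=
  {z | 0 < cross (a - v) (z - v) ∧ 0 < cross (z - v) (b - v)}

theorem interior_convexHull_triangle_subset_cone {v a b : Pt}
    (hab : 0 < cross (a - v) (b - v)) :
    interior (convexHull ℝ {v, a, b}) ⊆ cone v a b := by
  have ha : a - v ≠ 0 := fun h => by simp [h, cross] at hab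
  have hb : v - b ≠ 0 := fun h => by simp [sub_eq_zero.1 h] at hab
  intro z hz
  constructor
  · refine cross_pos_of_mem_interior_convexHull ha ?_ hz
    rintro p (rfl | rfl | rfl) <;> simp [hab.le]
  · have := cross_pos_of_mem_interior_convexHull (v := v) hb ?_ hz
    · simp only [cross, Prod.fst_sub, Prod.snd_sub] at this ⊢; linarith
    rintro p (rfl | rfl | rfl)
    · simp
    · simp only [cross, Prod.fst_sub, Prod.snd_sub] at hab ⊢; linarith
    · simp only [cross, Prod.fst_sub, Prod.snd_sub]; nlinarith

theorem notMem_interior_convexHull_triangle {a b c : Pt} (h : cross (b - a) (c - a) ≠ 0) :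
    ∀ p ∈ ({a, b, c} : Set Pt), p ∉ interior (convexHull ℝ {a, b, c}) := by
  wlog hpos : 0 < cross (b - a) (c - a) generalizing b c
  · have hneg : 0 < cross (c - a) (b - a) := by
      rw [cross_anticomm]; exact neg_pos.2 (lt_of_le_of_ne (not_lt.1 hpos) h)
    rw [Set.pair_comm]
    exact this (cross_anticomm (c - a) _ ▸ neg_ne_zero.2 h) hneg
  rintro p (rfl | rfl | rfl) hp <;>
    have := interior_convexHull_triangle_subset_cone hpos hp <;> simp_all [cone]

theorem mem_cone_or_mem_cone {v a b a' b' z : Pt} (hab : 0 < cross (a - v) (b - v))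
    (hab' : 0 < cross (a' - v) (b' - v)) (haa' : cross (a - v) (a' - v) ≠ 0)
    (hz : z ∈ cone v a b) (hz' : z ∈ cone v a' b') :
    a' ∈ cone v a b ∨ a ∈ cone v a' b' := by
  wlog h : 0 < cross (a - v) (a' - v) generalizing a b a' b'
  · have h' : 0 < cross (a' - v) (a - v) := by
      rw [cross_anticomm]; exact neg_pos.2 (lt_of_le_of_ne (not_lt.1 h) haa')
    exact (this hab' hab (cross_anticomm (a' - v) _ ▸ neg_ne_zero.2 haa') hz' hz h').symm
  exact Or.inl ⟨h, cross_pos_trans h hz.1 hab hz'.1 hz.2⟩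

/-- `s` is the counterclockwise successor of `q` among the points of `C` as seen from `v`. -/
def IsNext (v : Pt) (C : Finset Pt) (q s : Pt) : Prop :=
  0 < cross (q - v) (s - v) ∧ ∀ r ∈ C, r ∉ cone v q s

theorem exists_isNext {v q : Pt} {C : Finset Pt} (h : ∃ r ∈ C, 0 < cross (q - v) (r - v)) :
    ∃ s ∈ C, IsNext v C q s := by
  set L := C.filter fun r => 0 < cross (q - v) (r - v)
  have hL : L.Nonempty := by simpa [L, Finset.Nonempty] using h
  -- `cot r` is the cotangent of the angle from `q - v` to `r - v`; the successor maximises it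
  let cot : Pt → ℝ := fun r =>
    ((q - v).1 * (r - v).1 + (q - v).2 * (r - v).2) / cross (q - v) (r - v)
  obtain ⟨s, hsL, hmax⟩ := L.exists_max_image cot hL
  obtain ⟨hsC, hqs⟩ := mem_filter.1 hsL
  refine ⟨s, hsC, hqs, fun r hrC ⟨hqr, hrs⟩ => ?_⟩
  have hcot := hmax r (mem_filter.2 ⟨hrC, hqr⟩)
  rw [div_le_div_iff₀ hqr hqs] at hcot
  have hq := fst_sq_add_snd_sq_pos (sub_ne_zero.2 (ne_of_cross_sub_pos hqr).1.symm)
  have key : ((q - v).1 * (r - v).1 + (q - v).2 * (r - v).2) * cross (q - v) (s - v) -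
      ((q - v).1 * (s - v).1 + (q - v).2 * (s - v).2) * cross (q - v) (r - v) =
      ((q - v).1 ^ 2 + (q - v).2 ^ 2) * cross (r - v) (s - v) := by
    simp only [cross]; ring
  nlinarith

theorem IsNext.eq {v q s s' : Pt} {C : Finset Pt} (hC : GenPos (C : Set Pt)) (hv : v ∈ C)
    (hs : s ∈ C) (hs' : s' ∈ C) (h : IsNext v C q s) (h' : IsNext v C q s') : s = s' := by
  by_contra hne
  have hcross := hC.cross_ne_zero hv hs hs' (ne_of_cross_sub_pos h.1).2.1
    (ne_of_cross_sub_pos h'.1).2.1 hne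
  rcases hcross.lt_or_gt with hneg | hpos
  · exact h.2 s' hs' ⟨h'.1, by rw [cross_anticomm]; linarith⟩
  · exact h'.2 s hs ⟨h.1, hpos⟩

def fan (v : Pt) (C : Finset Pt) : Finset (Pt × Pt) :=
  (C ×ˢ C).filter fun e => IsNext v C e.1 e.2

variable {v : Pt} {C D : Finset Pt}

theorem mem_fan {e : Pt × Pt} :
    e ∈ fan v C ↔ e.1 ∈ C ∧ e.2 ∈ C ∧ IsNext v C e.1 e.2 := by
  simp [fan, and_assoc]

theorem notMem_interior_of_mem_fan {e : Pt × Pt} (he : e ∈ fan v C) {p : Pt} (hp : p ∈ C) :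
    p ∉ interior (convexHull ℝ {v, e.1, e.2}) := fun hint =>
  (mem_fan.1 he).2.2.2 p hp (interior_convexHull_triangle_subset_cone (mem_fan.1 he).2.2.1 hint)

theorem pairwiseDisjoint_fan (hC : GenPos (C : Set Pt)) (hv : v ∈ C) :
    (fan v C : Set (Pt × Pt)).PairwiseDisjoint
      fun e => interior (convexHull ℝ {v, e.1, e.2}) := by
  rintro e he e' he' hne
  obtain ⟨he1, he2, hnext⟩ := mem_fan.1 he
  obtain ⟨he1', he2', hnext'⟩ := mem_fan.1 he'
  refine Set.disjoint_left.2 fun z hz hz' => ?_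
  by_cases h1 : e.1 = e'.1
  · rw [h1] at hnext
    exact hne (Prod.ext h1 (hnext.eq hC hv he2 he2' hnext'))
  have hcross := hC.cross_ne_zero hv he1 he1' (ne_of_cross_sub_pos hnext.1).1
    (ne_of_cross_sub_pos hnext'.1).1 h1
  rcases mem_cone_or_mem_cone hnext.1 hnext'.1 hcross
    (interior_convexHull_triangle_subset_cone hnext.1 hz)
    (interior_convexHull_triangle_subset_cone hnext'.1 hz') with h | h
  · exact hnext.2 _ he1' h
  · exact hnext'.2 _ he1 h

theorem card_filter_le_card_fan :
    (C.filter fun q => ∃ r ∈ C, 0 < cross (q - v) (r - v)).card ≤ (fan v C).card := by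
  refine (card_le_card (t := (fan v C).image Prod.fst) fun q hq => ?_).trans card_image_le
  obtain ⟨hqC, hleft⟩ := mem_filter.1 hq
  obtain ⟨s, hsC, hnext⟩ := exists_isNext hleft
  exact mem_image.2 ⟨(q, s), mem_fan.2 ⟨hqC, hsC, hnext⟩, rfl⟩

theorem card_le_card_fan_add_two (hC : GenPos (C : Set Pt)) (hv : v ∈ C) :
    C.card ≤ (fan v C).card + 2 := by
  set N := C.filter fun q => ¬ ∃ r ∈ C, 0 < cross (q - v) (r - v)
  have hN : (N.erase v).card ≤ 1 := by
    refine card_le_one.2 fun q hq q' hq' => by_contra fun hne => ?_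
    obtain ⟨hqv, hqN⟩ := mem_erase.1 hq
    obtain ⟨hqv', hqN'⟩ := mem_erase.1 hq'
    obtain ⟨hqC, hq⟩ := mem_filter.1 hqN
    obtain ⟨hqC', hq'⟩ := mem_filter.1 hqN'
    push Not at hq hq'
    refine hC.cross_ne_zero hv hqC hqC' (Ne.symm hqv) (Ne.symm hqv') hne ?_
    linarith [hq q' hqC', hq' q hqC, cross_anticomm (q - v) (q' - v)]
  have : (C.filter fun q => ∃ r ∈ C, 0 < cross (q - v) (r - v)).card + N.card = C.card :=
    card_filter_add_card_filter_not _
  have := card_filter_le_card_fan (v := v) (C := C)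
  have := pred_card_le_card_erase (s := N) (a := v)
  omega

theorem card_le_card_fan_add_one_of_mem_interior
    (hint : v ∈ interior (convexHull ℝ (C : Set Pt))) : C.card ≤ (fan v C).card + 1 := by
  have hN : (C.filter fun q => ¬ ∃ r ∈ C, 0 < cross (q - v) (r - v)) ⊆ {v} := by
    intro q hq
    obtain ⟨hqC, hq⟩ := mem_filter.1 hq
    push Not at hq
    by_contra hqv
    have hvq : v - q ≠ 0 := sub_ne_zero.2 (Ne.symm (mem_singleton.not.1 hqv))
    have := cross_pos_of_mem_interior_convexHull (v := v) hvq (fun p hp => by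
      rw [← neg_sub, cross_neg_left]; linarith [hq p hp]) hint
    simp at this
  have := card_filter_add_card_filter_not (s := C) fun q => ∃ r ∈ C, 0 < cross (q - v) (r - v)
  have := card_filter_le_card_fan (v := v) (C := C)
  have := card_le_card hN
  simp only [card_singleton] at this
  omega

def HasEmptyTriangle (T S : Finset Pt) : Prop :=
  ∃ a ∈ T, ∃ b ∈ T, ∃ d ∈ T, a ≠ b ∧ a ≠ d ∧ b ≠ d ∧
    ∀ p ∈ S, p ∉ interior (convexHull ℝ ({a, b, d} : Set Pt))

theorem hasEmptyTriangle_of_mem_fan (hv : v ∈ C) {e : Pt × Pt} (he : e ∈ fan v C)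
    (hD : ∀ d ∈ D, d ∉ interior (convexHull ℝ {v, e.1, e.2})) :
    HasEmptyTriangle C (C ∪ D) := by
  obtain ⟨he1, he2, hnext⟩ := mem_fan.1 he
  obtain ⟨hv1, hv2, h12⟩ := ne_of_cross_sub_pos hnext.1
  refine ⟨v, hv, e.1, he1, e.2, he2, hv1, hv2, h12, fun p hp => ?_⟩
  rcases mem_union.1 hp with hpC | hpD
  · exact notMem_interior_of_mem_fan he hpC
  · exact hD p hpD

theorem hasEmptyTriangle_of_card_lt_card_fan (hC : GenPos (C : Set Pt)) (hv : v ∈ C)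
    (hlt : D.card < (fan v C).card) : HasEmptyTriangle C (C ∪ D) := by
  by_contra h
  refine hlt.not_ge (card_le_card_of_forall_exists_mem (pairwiseDisjoint_fan hC hv) fun e he => ?_)
  by_contra! hfree
  exact h (hasEmptyTriangle_of_mem_fan hv he hfree)

theorem hasEmptyTriangle_of_card_eq_three {S : Finset Pt} (hD : GenPos (D : Set Pt))
    (hcard : D.card = 3)
    (hS : ∀ p ∈ S, p ∉ D → p ∉ interior (convexHull ℝ (D : Set Pt))) :
    HasEmptyTriangle D S := by
  obtain ⟨a, b, c, hab, hac, hbc, rfl⟩ := card_eq_three.1 hcard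
  have hset : ((({a, b, c} : Finset Pt)) : Set Pt) = {a, b, c} := by simp
  refine ⟨a, by simp, b, by simp, c, by simp, hab, hac, hbc, fun p hp => ?_⟩
  by_cases hpD : p ∈ ({a, b, c} : Finset Pt)
  · rw [hset] at hD
    exact notMem_interior_convexHull_triangle
      (hD.cross_ne_zero (by simp) (by simp) (by simp) hab hac hbc) p (by simpa using hpD)
  · simpa [hset] using hS p hp hpD

theorem hasEmptyTriangle_of_card (hC : GenPos (C : Set Pt)) (hD : GenPos (D : Set Pt))
    (hCcard : 5 ≤ C.card) (hDcard : D.card ≤ 3) :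
    HasEmptyTriangle C (C ∪ D) ∨ HasEmptyTriangle D (C ∪ D) := by
  by_cases hint : ∃ c ∈ C, c ∈ interior (convexHull ℝ (C : Set Pt))
  · obtain ⟨c, hc, hcint⟩ := hint
    have := card_le_card_fan_add_one_of_mem_interior hcint
    exact Or.inl (hasEmptyTriangle_of_card_lt_card_fan hC hc (by omega))
  obtain ⟨v, hv⟩ : C.Nonempty := card_pos.1 (by omega)
  by_cases hfree : ∃ e ∈ fan v C, ∀ d ∈ D, d ∉ interior (convexHull ℝ {v, e.1, e.2})
  · obtain ⟨e, he, hfree⟩ := hfree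
    exact Or.inl (hasEmptyTriangle_of_mem_fan hv he hfree)
  push Not at hfree
  have hfan := card_le_card_fan_add_two hC hv
  have hle := card_le_card_of_forall_exists_mem (pairwiseDisjoint_fan hC hv) hfree
  have hcover := exists_mem_of_card_le (pairwiseDisjoint_fan hC hv) hfree (by omega)
  have hDC : (D : Set Pt) ⊆ convexHull ℝ (C : Set Pt) := fun d hd => by
    obtain ⟨e, he, hde⟩ := hcover d hd
    obtain ⟨he1, he2, -⟩ := mem_fan.1 he
    refine convexHull_mono ?_ (interior_subset hde)
    simp [Set.insert_subset_iff, hv, he1, he2]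
  refine Or.inr (hasEmptyTriangle_of_card_eq_three hD (by omega) fun p hp hpD hpint => hint ?_)
  exact ⟨p, (mem_union.1 hp).resolve_right hpD,
    interior_mono (convexHull_min hDC (convex_convexHull ℝ _)) hpint⟩

end Plane

/-- Any 2-colored point set of 8 points in general position whose two color classes
have different sizes contains a monochromatic empty triangle. -/
theorem eight_points_unequal_classes_empty_mono_triangle
    (S R B : Finset (ℝ × ℝ)) (hgp : GenPos (S : Set (ℝ × ℝ)))
    (hcard : S.card = 8) (hpart : R ∪ B = S) (hdisj : Disjoint R B)
    (hne : R.card ≠ B.card) :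
    ∃ a ∈ S, ∃ b ∈ S, ∃ d ∈ S, a ≠ b ∧ a ≠ d ∧ b ≠ d ∧
      ((a ∈ R ∧ b ∈ R ∧ d ∈ R) ∨ (a ∈ B ∧ b ∈ B ∧ d ∈ B)) ∧
      ∀ p ∈ S, p ∉ interior (convexHull ℝ ({a, b, d} : Set (ℝ × ℝ))) := by
  have hsum : R.card + B.card = 8 := by rw [← Finset.card_union_of_disjoint hdisj, hpart, hcard]
  have hRS : R ⊆ S := hpart ▸ Finset.subset_union_left
  have hBS : B ⊆ S := hpart ▸ Finset.subset_union_right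
  have hR := hgp.mono (Finset.coe_subset.2 hRS)
  have hB := hgp.mono (Finset.coe_subset.2 hBS)
  have h : Plane.HasEmptyTriangle R S ∨ Plane.HasEmptyTriangle B S := by
    rcases hne.lt_or_gt with hlt | hgt
    · rw [← hpart, Finset.union_comm, or_comm]
      exact Plane.hasEmptyTriangle_of_card hB hR (by omega) (by omega)
    · rw [← hpart]
      exact Plane.hasEmptyTriangle_of_card hR hB (by omega) (by omega)
  rcases h with ⟨a, ha, b, hb, d, hd, hab, had, hbd, hempty⟩ |
      ⟨a, ha, b, hb, d, hd, hab, had, hbd, hempty⟩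
  · exact ⟨a, hRS ha, b, hRS hb, d, hRS hd, hab, had, hbd, Or.inl ⟨ha, hb, hd⟩, hempty⟩
  · exact ⟨a, hBS ha, b, hBS hb, d, hBS hd, hab, had, hbd, Or.inr ⟨ha, hb, hd⟩, hempty⟩
end
end

section
/- Every set of 6 points in the plane in general position, colored with 2 colors, contains a monochromatic triangle with at most 1 point of the set in its interior. -/
/-!
Some colour class has at least three points. If one class has four points `a b c d`, then some
line through two of them strictly separates the other two (read off from the barycentric
coordinates of `d` with respect to `abc`). The two triangles on either side of that line have
disjoint interiors containing none of the four points, so the two remaining points cannot put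
two points into both. If both classes have exactly three points and neither triangle works, each
triangle has two vertices of the other in its interior, which barycentric coordinates rule out.
-/

open scoped Classical

noncomputable section

open Set Module

theorem collinear_of_eq_smul_add_smul {V : Type*} [AddCommGroup V] [Module ℝ V] {a b x : V}
    {s t : ℝ} (hst : s + t = 1) (hx : x = s • a + t • b) : Collinear ℝ {a, b, x} := by
  have hline : x = AffineMap.lineMap a b t := by
    rw [AffineMap.lineMap_apply_module, hx, ← hst, add_sub_cancel_right]
  have := collinear_insert_of_mem_affineSpan_pair <|
    hline ▸ AffineMap.lineMap_mem_affineSpan_pair t a b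
  rwa [insert_comm, pair_comm] at this

theorem Finset.card_triple_of_not_collinear {V : Type*} [AddCommGroup V] [Module ℝ V]
    [DecidableEq V] {a b c : V} (h : ¬ Collinear ℝ {a, b, c}) :
    ({a, b, c} : Finset V).card = 3 :=
  Finset.card_eq_three.2 ⟨a, b, c, ne₁₂_of_not_collinear h, ne₁₃_of_not_collinear h,
    ne₂₃_of_not_collinear h, rfl⟩

theorem Finset.exists_eq_triple_of_two_le_card_filter {α : Type*} [DecidableEq α] {s : Finset α}
    (hs : s.card = 3) {P : α → Prop} [DecidablePred P] (h : 2 ≤ (s.filter P).card) :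
    ∃ u v w, s = {u, v, w} ∧ P u ∧ P v := by
  obtain ⟨t, hts, ht⟩ := Finset.exists_subset_card_eq h
  obtain ⟨u, v, -, rfl⟩ := Finset.card_eq_two.1 ht
  have hsub : {u, v} ⊆ s := hts.trans (Finset.filter_subset P s)
  obtain ⟨w, hw⟩ := Finset.card_eq_one.1 <| by
    rw [Finset.card_sdiff_of_subset hsub, hs, ht]
  refine ⟨u, v, w, ?_, (Finset.mem_filter.1 (hts (by simp))).2,
    (Finset.mem_filter.1 (hts (by simp))).2⟩
  rw [← Finset.union_sdiff_of_subset hsub, hw, Finset.insert_union, ← Finset.insert_eq]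

theorem Finset.card_filter_le_one_or_card_filter_le_one {α : Type*} [DecidableEq α]
    {S Q : Finset α} (hQ : Q ⊆ S) (hcard : S.card ≤ Q.card + 2) {P₁ P₂ : α → Prop}
    [DecidablePred P₁] [DecidablePred P₂] (hdisj : ∀ ⦃x⦄, P₁ x → ¬ P₂ x)
    (h₁ : ∀ x ∈ Q, ¬ P₁ x) (h₂ : ∀ x ∈ Q, ¬ P₂ x) :
    (S.filter P₁).card ≤ 1 ∨ (S.filter P₂).card ≤ 1 := by
  have hsub : S.filter P₁ ∪ S.filter P₂ ⊆ S \ Q := by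
    intro x hx
    simp only [Finset.mem_union, Finset.mem_filter, Finset.mem_sdiff] at hx ⊢
    rcases hx with ⟨hxS, hx⟩ | ⟨hxS, hx⟩
    exacts [⟨hxS, fun hxQ ↦ h₁ x hxQ hx⟩, ⟨hxS, fun hxQ ↦ h₂ x hxQ hx⟩]
  have hd : Disjoint (S.filter P₁) (S.filter P₂) := Finset.disjoint_filter.2 fun _ _ ↦ @hdisj _
  have := Finset.card_le_card hsub
  rw [Finset.card_union_of_disjoint hd, Finset.card_sdiff_of_subset hQ] at this
  omega

section ConvexHull

variable {V : Type*} [NormedAddCommGroup V] [NormedSpace ℝ V] [FiniteDimensional ℝ V]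

/-- A nonconstant affine functional is an open map, so `f > 0` on the interior of `{f ≥ 0}`. -/
theorem AffineMap.pos_of_mem_interior_convexHull {s : Set V} {f : V →ᵃ[ℝ] ℝ}
    (hs : ∀ y ∈ s, 0 ≤ f y) {c : V} (hc : 0 < f c) {x : V}
    (hx : x ∈ interior (convexHull ℝ s)) : 0 < f x := by
  by_cases hf : f.linear = 0
  · obtain ⟨q, rfl⟩ := (AffineMap.linear_eq_zero_iff_exists_const f).1 hf
    exact hc
  have hopen : IsOpenMap f := AffineMap.isOpenMap_linear_iff.1 <|
    f.linear.isOpenMap_of_finiteDimensional (LinearMap.surjective_of_ne_zero hf)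
  have hsub : convexHull ℝ s ⊆ f ⁻¹' Ici 0 :=
    convexHull_min hs ((convex_Ici 0).affine_preimage f)
  have := interior_mono hsub hx
  rwa [← hopen.preimage_interior_eq_interior_preimage f.continuous_of_finiteDimensional,
    interior_Ici] at this

theorem disjoint_interior_convexHull_of_separated {u v s t : V} {g : V →ᵃ[ℝ] ℝ}
    (hgu : g u = 0) (hgv : g v = 0) (hgs : 0 < g s) (hgt : g t < 0) :
    Disjoint (interior (convexHull ℝ {u, v, s})) (interior (convexHull ℝ {u, v, t})) := by
  refine Set.disjoint_left.2 fun x hxs hxt ↦ ?_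
  have h₁ := g.pos_of_mem_interior_convexHull
    (by rintro y (rfl | rfl | rfl) <;> simp [hgu, hgv, hgs.le]) hgs hxs
  have h₂ := (-g).pos_of_mem_interior_convexHull
    (by rintro y (rfl | rfl | rfl) <;> simp [hgu, hgv, hgt.le]) (c := t)
    (by simpa using hgt) hxt
  simp only [AffineMap.coe_neg, Pi.neg_apply, Left.neg_pos_iff] at h₂
  linarith

end ConvexHull

section Triangle

variable {V : Type*} [NormedAddCommGroup V] [NormedSpace ℝ V] [Fact (finrank ℝ V = 2)]

attribute [local instance] FiniteDimensional.of_fact_finrank_eq_two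

def triangleBasis {a b c : V} (h : ¬ Collinear ℝ {a, b, c}) : AffineBasis (Fin 3) ℝ V :=
  have hind := affineIndependent_iff_not_collinear_set.2 h
  ⟨![a, b, c], hind, by
    rw [hind.affineSpan_eq_top_iff_card_eq_finrank_add_one, Fintype.card_fin,
      Fact.out (p := finrank ℝ V = 2)]⟩

variable {a b c : V} (h : ¬ Collinear ℝ {a, b, c})

theorem triangleBasis_coord_left (i : Fin 3) :
    (triangleBasis h).coord i a = if i = 0 then 1 else 0 := (triangleBasis h).coord_apply i 0

theorem triangleBasis_coord_middle (i : Fin 3) :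
    (triangleBasis h).coord i b = if i = 1 then 1 else 0 := (triangleBasis h).coord_apply i 1

theorem triangleBasis_coord_right (i : Fin 3) :
    (triangleBasis h).coord i c = if i = 2 then 1 else 0 := (triangleBasis h).coord_apply i 2

theorem range_triangleBasis : range (triangleBasis h) = {a, b, c} := by
  change range ![a, b, c] = _
  simp only [Matrix.range_cons, Matrix.range_empty, union_empty, singleton_union]

theorem mem_interior_convexHull_triple_iff {x : V} :
    x ∈ interior (convexHull ℝ {a, b, c}) ↔ ∀ i, 0 < (triangleBasis h).coord i x := by
  rw [← range_triangleBasis h, AffineBasis.interior_convexHull]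
  rfl

include h in
theorem notMem_interior_convexHull_triple {x : V} (hx : x ∈ ({a, b, c} : Set V)) :
    x ∉ interior (convexHull ℝ {a, b, c}) := by
  rw [← range_triangleBasis h] at hx
  obtain ⟨j, rfl⟩ := hx
  rw [mem_interior_convexHull_triple_iff h]
  intro hpos
  simpa [(triangleBasis h).coord_apply_ne (by omega : j + 1 ≠ j)] using hpos (j + 1)

theorem notMem_interior_convexHull_of_separated {u v s t x : V} (h : ¬ Collinear ℝ {u, v, s})
    {g : V →ᵃ[ℝ] ℝ} (hgu : g u = 0) (hgv : g v = 0) (hgs : 0 < g s) (hgt : g t ≤ 0)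
    (hx : x ∈ ({u, v, s, t} : Set V)) : x ∉ interior (convexHull ℝ {u, v, s}) := by
  rcases hx with rfl | rfl | rfl | rfl
  · exact notMem_interior_convexHull_triple h (by simp)
  · exact notMem_interior_convexHull_triple h (by simp)
  · exact notMem_interior_convexHull_triple h (by simp)
  · intro hx
    have := g.pos_of_mem_interior_convexHull
      (by rintro y (rfl | rfl | rfl) <;> simp [hgu, hgv, hgs.le]) hgs hx
    linarith

/-- Some line through two of four points in general position strictly separates the other two. -/
theorem exists_affineMap_separating {a b c d : V} (habc : ¬ Collinear ℝ {a, b, c})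
    (habd : ¬ Collinear ℝ {a, b, d}) (hacd : ¬ Collinear ℝ {a, c, d})
    (hbcd : ¬ Collinear ℝ {b, c, d}) :
    ∃ g : V →ᵃ[ℝ] ℝ, (g a = 0 ∧ g b = 0 ∧ 0 < g c ∧ g d < 0) ∨
      (g b = 0 ∧ g c = 0 ∧ 0 < g a ∧ g d < 0) ∨ (g a = 0 ∧ g c = 0 ∧ 0 < g b ∧ g d < 0) ∨
      (g b = 0 ∧ g d = 0 ∧ 0 < g c ∧ g a < 0) := by
  have hA := triangleBasis_coord_left habc
  have hB := triangleBasis_coord_middle habc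
  have hC := triangleBasis_coord_right habc
  set B := triangleBasis habc
  set x := B.coord 0 d
  set y := B.coord 1 d
  set z := B.coord 2 d
  have hsum : x + y + z = 1 := by
    have := B.sum_coord_apply_eq_one d
    rwa [Fin.sum_univ_three] at this
  have hd : d = x • a + y • b + z • c := by
    have := B.linear_combination_coord_eq_self d
    rw [Fin.sum_univ_three] at this
    exact this.symm
  have hx : x ≠ 0 := fun h0 ↦ hbcd <| collinear_of_eq_smul_add_smul (s := y) (t := z)
    (by linarith) (by rw [hd, h0, zero_smul, zero_add])
  have hy : y ≠ 0 := fun h0 ↦ hacd <| collinear_of_eq_smul_add_smul (s := x) (t := z)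
    (by linarith) (by rw [hd, h0, zero_smul, add_zero])
  have hz : z ≠ 0 := fun h0 ↦ habd <| collinear_of_eq_smul_add_smul (s := x) (t := y)
    (by linarith) (by rw [hd, h0, zero_smul, add_zero])
  rcases hz.lt_or_gt with hz | hz
  · exact ⟨B.coord 2, Or.inl ⟨by simp [hA], by simp [hB], by simp [hC], hz⟩⟩
  rcases hx.lt_or_gt with hx | hx
  · exact ⟨B.coord 0, Or.inr <| Or.inl ⟨by simp [hB], by simp [hC], by simp [hA], hx⟩⟩
  rcases hy.lt_or_gt with hy | hy
  · exact ⟨B.coord 1, Or.inr <| Or.inr <| Or.inl ⟨by simp [hA], by simp [hC], by simp [hB], hy⟩⟩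
  -- `d` lies inside `abc`, and the line `bd` separates `a` from `c`
  refine ⟨x • B.coord 2 - z • B.coord 0, Or.inr <| Or.inr <| Or.inr ⟨?_, ?_, ?_, ?_⟩⟩ <;>
    simp [hA, hB, hC] <;> nlinarith

/-- Each barycentric coordinate of `pqr` vanishes at `p` or at `q`, points inside `abc` where
`a` and `b` are positive; so it is negative at `c`, and these three coordinates cannot sum
to `1`. -/
theorem notMem_interior_of_two_vertices_mem_interior {a b c p q r : V}
    (hpqr : ¬ Collinear ℝ {p, q, r})
    (hp : p ∈ interior (convexHull ℝ {a, b, c})) (hq : q ∈ interior (convexHull ℝ {a, b, c}))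
    (ha : a ∈ interior (convexHull ℝ {p, q, r})) : b ∉ interior (convexHull ℝ {p, q, r}) := by
  intro hb
  let B := triangleBasis hpqr
  rw [mem_interior_convexHull_triple_iff hpqr] at ha hb
  have hneg (i : Fin 3) {y : V} (hy : y ∈ interior (convexHull ℝ {a, b, c}))
      (hy0 : B.coord i y = 0) : B.coord i c < 0 := by
    by_contra! hc
    have hnonneg : ∀ v ∈ ({a, b, c} : Set V), 0 ≤ B.coord i v := by
      rintro v (rfl | rfl | rfl)
      exacts [(ha i).le, (hb i).le, hc]
    exact (B.coord i).pos_of_mem_interior_convexHull hnonneg (ha i) hy |>.ne' hy0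
  have h0 := hneg 0 hq (by simp [B, triangleBasis_coord_middle])
  have h1 := hneg 1 hp (by simp [B, triangleBasis_coord_left])
  have h2 := hneg 2 hp (by simp [B, triangleBasis_coord_left])
  have hsum := B.sum_coord_apply_eq_one c
  rw [Fin.sum_univ_three] at hsum
  linarith

theorem card_filter_mem_interior_triple_le_one [DecidableEq V] {a b c p q r : V}
    (habc : ¬ Collinear ℝ {a, b, c}) (hpqr : ¬ Collinear ℝ {p, q, r})
    (h : 1 < (({p, q, r} : Finset V).filter (· ∈ interior (convexHull ℝ {a, b, c}))).card) :
    (({a, b, c} : Finset V).filter (· ∈ interior (convexHull ℝ {p, q, r}))).card ≤ 1 := by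
  by_contra! h'
  obtain ⟨p', q', r', e₁, hp', hq'⟩ :=
    Finset.exists_eq_triple_of_two_le_card_filter (Finset.card_triple_of_not_collinear hpqr) h
  obtain ⟨a', b', c', e₂, ha', hb'⟩ :=
    Finset.exists_eq_triple_of_two_le_card_filter (Finset.card_triple_of_not_collinear habc) h'
  have e₁' : ({p, q, r} : Set V) = {p', q', r'} := by
    simpa using congrArg (fun s : Finset V ↦ (s : Set V)) e₁
  have e₂' : ({a, b, c} : Set V) = {a', b', c'} := by
    simpa using congrArg (fun s : Finset V ↦ (s : Set V)) e₂
  rw [e₁'] at hpqr ha' hb'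
  rw [e₂'] at hp' hq'
  exact notMem_interior_of_two_vertices_mem_interior hpqr hp' hq' ha' hb'

end Triangle

instance : Fact (finrank ℝ (ℝ × ℝ) = 2) := ⟨by simp⟩

theorem triPts_sdiff_vertices (S : Finset (ℝ × ℝ)) {a b c : ℝ × ℝ}
    (h : ¬ Collinear ℝ {a, b, c}) : triPts (S \ {a, b, c}) a b c = triPts S a b c := by
  unfold triPts
  congr 1
  ext x
  simp only [Finset.mem_filter, Finset.mem_sdiff, and_congr_left_iff, and_iff_left_iff_imp]
  intro hx _ hmem
  exact notMem_interior_convexHull_triple h (by simpa using hmem) hx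

theorem monoTriangle_of_separated {k : ℕ} {S : Finset (ℝ × ℝ)} (hS : S.card ≤ 6)
    (hgp : GenPos (S : Set (ℝ × ℝ))) {χ : ℝ × ℝ → Fin k} {i : Fin k} {u v s t : ℝ × ℝ}
    (hu : u ∈ S.filter (χ · = i)) (hv : v ∈ S.filter (χ · = i))
    (hs : s ∈ S.filter (χ · = i)) (ht : t ∈ S.filter (χ · = i)) (huv : u ≠ v)
    {g : ℝ × ℝ →ᵃ[ℝ] ℝ} (hgu : g u = 0) (hgv : g v = 0) (hgs : 0 < g s) (hgt : g t < 0) :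
    MonoTriangle S χ 1 := by
  rw [Finset.mem_filter] at hu hv hs ht
  have hsu : s ≠ u := fun e ↦ by rw [e] at hgs; linarith
  have hsv : s ≠ v := fun e ↦ by rw [e] at hgs; linarith
  have htu : t ≠ u := fun e ↦ by rw [e] at hgt; linarith
  have htv : t ≠ v := fun e ↦ by rw [e] at hgt; linarith
  have hst : s ≠ t := fun e ↦ by rw [e] at hgs; linarith
  have huvs : ¬ Collinear ℝ {u, v, s} := hgp u hu.1 v hv.1 s hs.1 huv hsu.symm hsv.symm
  have huvt : ¬ Collinear ℝ {u, v, t} := hgp u hu.1 v hv.1 t ht.1 huv htu.symm htv.symm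
  have hQ : ({u, v, s, t} : Finset (ℝ × ℝ)).card = 4 :=
    Finset.card_eq_four.2 ⟨u, v, s, t, huv, hsu.symm, htu.symm, hsv.symm, htv.symm, hst, rfl⟩
  have hQS : {u, v, s, t} ⊆ S := by
    intro x hx
    simp only [Finset.mem_insert, Finset.mem_singleton] at hx
    rcases hx with rfl | rfl | rfl | rfl
    exacts [hu.1, hv.1, hs.1, ht.1]
  have hQ₁ (x) (hx : x ∈ ({u, v, s, t} : Finset (ℝ × ℝ))) :
      x ∉ interior (convexHull ℝ {u, v, s}) :=
    notMem_interior_convexHull_of_separated huvs hgu hgv hgs hgt.le (by simpa using hx)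
  have hQ₂ (x) (hx : x ∈ ({u, v, s, t} : Finset (ℝ × ℝ))) :
      x ∉ interior (convexHull ℝ {u, v, t}) :=
    notMem_interior_convexHull_of_separated huvt (g := -g) (by simp [hgu]) (by simp [hgv])
      (by simpa using hgt) (by simpa using hgs.le) (by simp at hx ⊢; tauto)
  rcases Finset.card_filter_le_one_or_card_filter_le_one hQS (by omega)
      (Set.disjoint_left.1 (disjoint_interior_convexHull_of_separated hgu hgv hgs hgt)) hQ₁ hQ₂
      with h | h
  · exact ⟨u, hu.1, v, hv.1, s, hs.1, huv, hsu.symm, hsv.symm, hu.2.trans hv.2.symm,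
      hv.2.trans hs.2.symm, h⟩
  · exact ⟨u, hu.1, v, hv.1, t, ht.1, huv, htu.symm, htv.symm, hu.2.trans hv.2.symm,
      hv.2.trans ht.2.symm, h⟩

theorem monoTriangle_of_four {k : ℕ} {S : Finset (ℝ × ℝ)} (hS : S.card ≤ 6)
    (hgp : GenPos (S : Set (ℝ × ℝ))) {χ : ℝ × ℝ → Fin k} {i : Fin k} {a b c d : ℝ × ℝ}
    (ha : a ∈ S.filter (χ · = i)) (hb : b ∈ S.filter (χ · = i))
    (hc : c ∈ S.filter (χ · = i)) (hd : d ∈ S.filter (χ · = i))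
    (hab : a ≠ b) (hac : a ≠ c) (had : a ≠ d) (hbc : b ≠ c) (hbd : b ≠ d) (hcd : c ≠ d) :
    MonoTriangle S χ 1 := by
  have hmem {x} (hx : x ∈ S.filter (χ · = i)) : x ∈ (S : Set (ℝ × ℝ)) :=
    (Finset.mem_filter.1 hx).1
  obtain ⟨g, ⟨h₁, h₂, h₃, h₄⟩ | ⟨h₁, h₂, h₃, h₄⟩ | ⟨h₁, h₂, h₃, h₄⟩ | ⟨h₁, h₂, h₃, h₄⟩⟩ :=
    exists_affineMap_separating (hgp a (hmem ha) b (hmem hb) c (hmem hc) hab hac hbc)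
      (hgp a (hmem ha) b (hmem hb) d (hmem hd) hab had hbd)
      (hgp a (hmem ha) c (hmem hc) d (hmem hd) hac had hcd)
      (hgp b (hmem hb) c (hmem hc) d (hmem hd) hbc hbd hcd)
  · exact monoTriangle_of_separated hS hgp ha hb hc hd hab h₁ h₂ h₃ h₄
  · exact monoTriangle_of_separated hS hgp hb hc ha hd hbc h₁ h₂ h₃ h₄
  · exact monoTriangle_of_separated hS hgp ha hc hb hd hac h₁ h₂ h₃ h₄
  · exact monoTriangle_of_separated hS hgp hb hd hc ha hbd h₁ h₂ h₃ h₄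

theorem monoTriangle_of_card_filter_eq_three {S : Finset (ℝ × ℝ)} (hS : S.card = 6)
    (hgp : GenPos (S : Set (ℝ × ℝ))) {χ : ℝ × ℝ → Fin 2} {i : Fin 2}
    (hA : (S.filter (χ · = i)).card = 3) : MonoTriangle S χ 1 := by
  set A := S.filter (χ · = i)
  have hAS : A ⊆ S := Finset.filter_subset _ S
  obtain ⟨a, b, c, hab, hac, hbc, hAabc⟩ := Finset.card_eq_three.1 hA
  obtain ⟨p, q, r, hpq, hpr, hqr, hBpqr⟩ := Finset.card_eq_three.1 <| show (S \ A).card = 3 by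
    rw [Finset.card_sdiff_of_subset hAS, hS, hA]
  have hmemA {x} (hx : x ∈ ({a, b, c} : Finset (ℝ × ℝ))) : x ∈ S ∧ χ x = i :=
    Finset.mem_filter.1 (hAabc ▸ hx)
  have hmemB {x} (hx : x ∈ ({p, q, r} : Finset (ℝ × ℝ))) : x ∈ S ∧ χ x ≠ i := by
    rw [← hBpqr, Finset.mem_sdiff, Finset.mem_filter] at hx
    exact ⟨hx.1, fun h ↦ hx.2 ⟨hx.1, h⟩⟩
  have hcolA {x y} (hx : x ∈ ({a, b, c} : Finset (ℝ × ℝ)))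
      (hy : y ∈ ({a, b, c} : Finset (ℝ × ℝ))) : χ x = χ y :=
    (hmemA hx).2.trans (hmemA hy).2.symm
  have hcolB {x y} (hx : x ∈ ({p, q, r} : Finset (ℝ × ℝ)))
      (hy : y ∈ ({p, q, r} : Finset (ℝ × ℝ))) : χ x = χ y := by
    have := (hmemB hx).2
    have := (hmemB hy).2
    omega
  have habc : ¬ Collinear ℝ {a, b, c} := hgp a (hmemA (by simp)).1 b (hmemA (by simp)).1
    c (hmemA (by simp)).1 hab hac hbc
  have hpqr : ¬ Collinear ℝ {p, q, r} := hgp p (hmemB (by simp)).1 q (hmemB (by simp)).1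
    r (hmemB (by simp)).1 hpq hpr hqr
  by_contra hno
  have h₁ : 1 < triPts {p, q, r} a b c := by
    rw [← hBpqr, hAabc, triPts_sdiff_vertices S habc]
    exact not_le.1 fun h ↦ hno ⟨a, (hmemA (by simp)).1, b, (hmemA (by simp)).1, c,
      (hmemA (by simp)).1, hab, hac, hbc,
      hcolA (by simp) (by simp), hcolA (by simp) (by simp), h⟩
  have h₂ : 1 < triPts {a, b, c} p q r := by
    rw [← hAabc, ← Finset.sdiff_sdiff_eq_self hAS, hBpqr, triPts_sdiff_vertices S hpqr]
    exact not_le.1 fun h ↦ hno ⟨p, (hmemB (by simp)).1, q, (hmemB (by simp)).1, r,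
      (hmemB (by simp)).1, hpq, hpr, hqr,
      hcolB (by simp) (by simp), hcolB (by simp) (by simp), h⟩
  exact h₂.not_ge (card_filter_mem_interior_triple_le_one habc hpqr h₁)

/-- Every 2-colored set of 6 points in general position contains a monochromatic
triangle with at most 1 interior point. -/
theorem six_points_two_colors (S : Finset (ℝ × ℝ)) (hcard : S.card = 6)
    (hgp : GenPos (S : Set (ℝ × ℝ))) (χ : ℝ × ℝ → Fin 2) :
    MonoTriangle S χ 1 := by
  obtain ⟨i, -, hi⟩ := Finset.exists_le_card_fiber_of_mul_le_card_of_maps_to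
    (fun x _ ↦ Finset.mem_univ (χ x)) Finset.univ_nonempty (s := S) (n := 3) (by simp [hcard])
  rcases hi.eq_or_lt with h3 | h4
  · exact monoTriangle_of_card_filter_eq_three hcard hgp h3.symm
  obtain ⟨T, hT, hT4⟩ := Finset.exists_subset_card_eq (Nat.succ_le_of_lt h4)
  obtain ⟨a, b, c, d, hab, hac, had, hbc, hbd, hcd, rfl⟩ := Finset.card_eq_four.1 hT4
  exact monoTriangle_of_four hcard.le hgp (hT (by simp)) (hT (by simp)) (hT (by simp))
    (hT (by simp)) hab hac had hbc hbd hcd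
end
end

section
/- There exists a set of 12 points in the plane in general position and a 3-coloring of it such that every monochromatic triangle contains at least 2 points of the set in its interior. -/
open scoped Classical

noncomputable section

/- ### Auxiliary setup -/

lemma notCollinear_of_det {a b c : ℝ × ℝ}
    (h : (b.1-a.1)*(c.2-a.2) - (b.2-a.2)*(c.1-a.1) ≠ 0) :
    ¬ Collinear ℝ ({a,b,c} : Set (ℝ × ℝ)) := by
  intro hc
  rw [collinear_iff_of_mem (Set.mem_insert a _)] at hc
  obtain ⟨v, hv⟩ := hc
  obtain ⟨rb, hb⟩ := hv b (by simp)
  obtain ⟨rc, hcc⟩ := hv c (by simp)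
  apply h
  rw [hb, hcc]
  simp only [Prod.smul_fst, Prod.smul_snd, Prod.fst_add, Prod.snd_add, vadd_eq_add,
    smul_eq_mul, add_sub_cancel_right]
  ring

lemma affInd_of_det {a b c : ℝ × ℝ}
    (h : (b.1-a.1)*(c.2-a.2) - (b.2-a.2)*(c.1-a.1) ≠ 0) :
    AffineIndependent ℝ ![a,b,c] := by
  rw [affineIndependent_iff_not_collinear]
  have hr : Set.range ![a,b,c] = ({a,b,c} : Set (ℝ × ℝ)) := by
    ext x; simp [Matrix.range_cons, Matrix.range_empty]; tauto
  rw [hr]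
  exact notCollinear_of_det h

lemma mem_interior_triangle {a b c p : ℝ × ℝ} {α β γ : ℝ}
    (hα : 0 < α) (hβ : 0 < β) (hγ : 0 < γ) (hsum : α + β + γ = 1)
    (hp : α • a + β • b + γ • c = p)
    (hdet : (b.1-a.1)*(c.2-a.2) - (b.2-a.2)*(c.1-a.1) ≠ 0) :
    p ∈ interior (convexHull ℝ ({a,b,c} : Set (ℝ × ℝ))) := by
  have hind := affInd_of_det hdet
  have hr : Set.range ![a,b,c] = ({a,b,c} : Set (ℝ × ℝ)) := by
    ext x; simp [Matrix.range_cons, Matrix.range_empty]; tauto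
  have htop : affineSpan ℝ (Set.range ![a,b,c]) = ⊤ := by
    rw [hind.affineSpan_eq_top_iff_card_eq_finrank_add_one]
    simp
  let B : AffineBasis (Fin 3) ℝ (ℝ × ℝ) := ⟨![a,b,c], hind, htop⟩
  have hrB : Set.range (B : Fin 3 → ℝ × ℝ) = ({a,b,c} : Set (ℝ × ℝ)) := hr
  rw [← hrB, B.interior_convexHull]
  have hw : ∑ i, (![α,β,γ]) i = 1 := by simp [Fin.sum_univ_three, hsum]
  have hpc : p = Finset.univ.affineCombination ℝ (B : Fin 3 → ℝ × ℝ) ![α,β,γ] := by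
    rw [Finset.affineCombination_eq_linear_combination _ _ _ hw, Fin.sum_univ_three, ← hp]
    rfl
  intro i
  rw [hpc, B.coord_apply_combination_of_mem (Finset.mem_univ i) hw]
  fin_cases i <;> simpa

lemma two_le_triPts_aux (S : Finset (ℝ × ℝ)) (a b c w1 w2 : ℝ × ℝ)
    (h12 : w1 ≠ w2) (h1S : w1 ∈ S) (h2S : w2 ∈ S)
    (h1 : w1 ∈ interior (convexHull ℝ ({a,b,c} : Set (ℝ × ℝ))))
    (h2 : w2 ∈ interior (convexHull ℝ ({a,b,c} : Set (ℝ × ℝ)))) :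
    2 ≤ (S.filter (fun p => p ∈ interior (convexHull ℝ ({a, b, c} : Set (ℝ × ℝ))))).card := by
  have hsub : ({w1, w2} : Finset (ℝ × ℝ)) ⊆
      S.filter (fun p => p ∈ interior (convexHull ℝ ({a, b, c} : Set (ℝ × ℝ)))) := by
    intro x hx
    simp only [Finset.mem_insert, Finset.mem_singleton] at hx
    rcases hx with rfl | rfl <;> simp_all
  calc 2 = ({w1, w2} : Finset (ℝ × ℝ)).card := by
        rw [Finset.card_insert_of_notMem (by simpa), Finset.card_singleton]
  _ ≤ _ := Finset.card_le_card hsub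

/- ### The configuration -/

def fq : Fin 12 → ℤ × ℤ :=
  ![(30,0),(-5,-5),(-30,0),(5,5),(15,26),(-6,-3),(-15,-26),(6,3),(-15,26),(-6,-4),(15,-26),(6,4)]

def fpt : Fin 12 → ℝ × ℝ := fun i => (((fq i).1 : ℝ), ((fq i).2 : ℝ))

def Spts : Finset (ℝ × ℝ) := Finset.image fpt Finset.univ

def colorIdx : Fin 12 → Fin 3 := ![0,0,0,0,1,1,1,1,2,2,2,2]

def chi : ℝ × ℝ → Fin 3 := fun p => if h : ∃ i, fpt i = p then colorIdx h.choose else 0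

def monoList : List (Finset (Fin 12)) :=
  [{0,1,2},{0,1,3},{0,2,3},{1,2,3},{4,5,6},{4,5,7},{4,6,7},{5,6,7},{8,9,10},{8,9,11},{8,10,11},{9,10,11}]

lemma hq_inj : ∀ i j : Fin 12, fq i = fq j → i = j := by decide

lemma hdet : ∀ i j k : Fin 12, i ≠ j → i ≠ k → j ≠ k →
    ((fq j).1-(fq i).1)*((fq k).2-(fq i).2) - ((fq j).2-(fq i).2)*((fq k).1-(fq i).1) ≠ 0 := by
  decide

lemma htriple : ∀ i j k : Fin 12, i ≠ j → i ≠ k → j ≠ k →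
    colorIdx i = colorIdx j → colorIdx j = colorIdx k →
    ({i,j,k} : Finset (Fin 12)) ∈ monoList := by decide

lemma hinj : Function.Injective fpt := by
  intro i j h
  apply hq_inj
  simp only [fpt, Prod.ext_iff] at h
  exact Prod.ext (by exact_mod_cast h.1) (by exact_mod_cast h.2)

lemma hchi (i : Fin 12) : chi (fpt i) = colorIdx i := by
  have hex : ∃ j, fpt j = fpt i := ⟨i, rfl⟩
  simp only [chi, dif_pos hex]
  congr 1
  exact hinj hex.choose_spec

lemma setimg {i j k i' j' k' : Fin 12} (h : ({i,j,k} : Finset (Fin 12)) = {i',j',k'}) :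
    ({fpt i, fpt j, fpt k} : Set (ℝ × ℝ)) = {fpt i', fpt j', fpt k'} := by
  have h2 := congrArg (fun s : Finset (Fin 12) => fpt '' (↑s : Set (Fin 12))) h
  simpa [Set.image_insert_eq] using h2

lemma he0 : fpt 0 = ((30 : ℝ), (0 : ℝ)) := by
  norm_num [fpt, show fq 0 = ((30 : ℤ), (0 : ℤ)) from rfl]

lemma he1 : fpt 1 = ((-5 : ℝ), (-5 : ℝ)) := by
  norm_num [fpt, show fq 1 = ((-5 : ℤ), (-5 : ℤ)) from rfl]

lemma he2 : fpt 2 = ((-30 : ℝ), (0 : ℝ)) := by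
  norm_num [fpt, show fq 2 = ((-30 : ℤ), (0 : ℤ)) from rfl]

lemma he3 : fpt 3 = ((5 : ℝ), (5 : ℝ)) := by
  norm_num [fpt, show fq 3 = ((5 : ℤ), (5 : ℤ)) from rfl]

lemma he4 : fpt 4 = ((15 : ℝ), (26 : ℝ)) := by
  norm_num [fpt, show fq 4 = ((15 : ℤ), (26 : ℤ)) from rfl]

lemma he5 : fpt 5 = ((-6 : ℝ), (-3 : ℝ)) := by
  norm_num [fpt, show fq 5 = ((-6 : ℤ), (-3 : ℤ)) from rfl]

lemma he6 : fpt 6 = ((-15 : ℝ), (-26 : ℝ)) := by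
  norm_num [fpt, show fq 6 = ((-15 : ℤ), (-26 : ℤ)) from rfl]

lemma he7 : fpt 7 = ((6 : ℝ), (3 : ℝ)) := by
  norm_num [fpt, show fq 7 = ((6 : ℤ), (3 : ℤ)) from rfl]

lemma he8 : fpt 8 = ((-15 : ℝ), (26 : ℝ)) := by
  norm_num [fpt, show fq 8 = ((-15 : ℤ), (26 : ℤ)) from rfl]

lemma he9 : fpt 9 = ((-6 : ℝ), (-4 : ℝ)) := by
  norm_num [fpt, show fq 9 = ((-6 : ℤ), (-4 : ℤ)) from rfl]

lemma he10 : fpt 10 = ((15 : ℝ), (-26 : ℝ)) := by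
  norm_num [fpt, show fq 10 = ((15 : ℤ), (-26 : ℤ)) from rfl]

lemma he11 : fpt 11 = ((6 : ℝ), (4 : ℝ)) := by
  norm_num [fpt, show fq 11 = ((6 : ℤ), (4 : ℤ)) from rfl]

lemma tri0 : ∀ a b d : ℝ × ℝ, ({a,b,d} : Set (ℝ × ℝ)) = {fpt 0, fpt 1, fpt 2} → 2 ≤ triPts Spts a b d := by
  intro a b d h
  rw [triPts]
  apply two_le_triPts_aux Spts a b d (fpt 5) (fpt 9)
  · exact hinj.ne (by decide)
  · exact Finset.mem_image_of_mem fpt (Finset.mem_univ _)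
  · exact Finset.mem_image_of_mem fpt (Finset.mem_univ _)
  · rw [h, he0, he1, he2, he5]
    refine mem_interior_triangle (α := (3/20 : ℝ)) (β := (3/5 : ℝ)) (γ := (1/4 : ℝ)) (by norm_num) (by norm_num) (by norm_num) (by norm_num) ?_ (by norm_num)
    norm_num [Prod.smul_mk, Prod.mk_add_mk, Prod.mk.injEq]
  · rw [h, he0, he1, he2, he9]
    refine mem_interior_triangle (α := (1/15 : ℝ)) (β := (4/5 : ℝ)) (γ := (2/15 : ℝ)) (by norm_num) (by norm_num) (by norm_num) (by norm_num) ?_ (by norm_num)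
    norm_num [Prod.smul_mk, Prod.mk_add_mk, Prod.mk.injEq]

lemma tri1 : ∀ a b d : ℝ × ℝ, ({a,b,d} : Set (ℝ × ℝ)) = {fpt 0, fpt 1, fpt 3} → 2 ≤ triPts Spts a b d := by
  intro a b d h
  rw [triPts]
  apply two_le_triPts_aux Spts a b d (fpt 7) (fpt 11)
  · exact hinj.ne (by decide)
  · exact Finset.mem_image_of_mem fpt (Finset.mem_univ _)
  · exact Finset.mem_image_of_mem fpt (Finset.mem_univ _)
  · rw [h, he0, he1, he3, he7]
    refine mem_interior_triangle (α := (1/10 : ℝ)) (β := (3/20 : ℝ)) (γ := (3/4 : ℝ)) (by norm_num) (by norm_num) (by norm_num) (by norm_num) ?_ (by norm_num)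
    norm_num [Prod.smul_mk, Prod.mk_add_mk, Prod.mk.injEq]
  · rw [h, he0, he1, he3, he11]
    refine mem_interior_triangle (α := (1/15 : ℝ)) (β := (1/15 : ℝ)) (γ := (13/15 : ℝ)) (by norm_num) (by norm_num) (by norm_num) (by norm_num) ?_ (by norm_num)
    norm_num [Prod.smul_mk, Prod.mk_add_mk, Prod.mk.injEq]

lemma tri2 : ∀ a b d : ℝ × ℝ, ({a,b,d} : Set (ℝ × ℝ)) = {fpt 0, fpt 2, fpt 3} → 2 ≤ triPts Spts a b d := by
  intro a b d h
  rw [triPts]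
  apply two_le_triPts_aux Spts a b d (fpt 7) (fpt 11)
  · exact hinj.ne (by decide)
  · exact Finset.mem_image_of_mem fpt (Finset.mem_univ _)
  · exact Finset.mem_image_of_mem fpt (Finset.mem_univ _)
  · rw [h, he0, he2, he3, he7]
    refine mem_interior_triangle (α := (1/4 : ℝ)) (β := (3/20 : ℝ)) (γ := (3/5 : ℝ)) (by norm_num) (by norm_num) (by norm_num) (by norm_num) ?_ (by norm_num)
    norm_num [Prod.smul_mk, Prod.mk_add_mk, Prod.mk.injEq]
  · rw [h, he0, he2, he3, he11]
    refine mem_interior_triangle (α := (2/15 : ℝ)) (β := (1/15 : ℝ)) (γ := (4/5 : ℝ)) (by norm_num) (by norm_num) (by norm_num) (by norm_num) ?_ (by norm_num)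
    norm_num [Prod.smul_mk, Prod.mk_add_mk, Prod.mk.injEq]

lemma tri3 : ∀ a b d : ℝ × ℝ, ({a,b,d} : Set (ℝ × ℝ)) = {fpt 1, fpt 2, fpt 3} → 2 ≤ triPts Spts a b d := by
  intro a b d h
  rw [triPts]
  apply two_le_triPts_aux Spts a b d (fpt 5) (fpt 9)
  · exact hinj.ne (by decide)
  · exact Finset.mem_image_of_mem fpt (Finset.mem_univ _)
  · exact Finset.mem_image_of_mem fpt (Finset.mem_univ _)
  · rw [h, he1, he2, he3, he5]
    refine mem_interior_triangle (α := (3/4 : ℝ)) (β := (1/10 : ℝ)) (γ := (3/20 : ℝ)) (by norm_num) (by norm_num) (by norm_num) (by norm_num) ?_ (by norm_num)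
    norm_num [Prod.smul_mk, Prod.mk_add_mk, Prod.mk.injEq]
  · rw [h, he1, he2, he3, he9]
    refine mem_interior_triangle (α := (13/15 : ℝ)) (β := (1/15 : ℝ)) (γ := (1/15 : ℝ)) (by norm_num) (by norm_num) (by norm_num) (by norm_num) ?_ (by norm_num)
    norm_num [Prod.smul_mk, Prod.mk_add_mk, Prod.mk.injEq]

lemma tri4 : ∀ a b d : ℝ × ℝ, ({a,b,d} : Set (ℝ × ℝ)) = {fpt 4, fpt 5, fpt 6} → 2 ≤ triPts Spts a b d := by
  intro a b d h
  rw [triPts]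
  apply two_le_triPts_aux Spts a b d (fpt 1) (fpt 9)
  · exact hinj.ne (by decide)
  · exact Finset.mem_image_of_mem fpt (Finset.mem_univ _)
  · exact Finset.mem_image_of_mem fpt (Finset.mem_univ _)
  · rw [h, he4, he5, he6, he1]
    refine mem_interior_triangle (α := (41/222 : ℝ)) (β := (55/111 : ℝ)) (γ := (71/222 : ℝ)) (by norm_num) (by norm_num) (by norm_num) (by norm_num) ?_ (by norm_num)
    norm_num [Prod.smul_mk, Prod.mk_add_mk, Prod.mk.injEq]
  · rw [h, he4, he5, he6, he9]
    refine mem_interior_triangle (α := (3/74 : ℝ)) (β := (32/37 : ℝ)) (γ := (7/74 : ℝ)) (by norm_num) (by norm_num) (by norm_num) (by norm_num) ?_ (by norm_num)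
    norm_num [Prod.smul_mk, Prod.mk_add_mk, Prod.mk.injEq]

lemma tri5 : ∀ a b d : ℝ × ℝ, ({a,b,d} : Set (ℝ × ℝ)) = {fpt 4, fpt 5, fpt 7} → 2 ≤ triPts Spts a b d := by
  intro a b d h
  rw [triPts]
  apply two_le_triPts_aux Spts a b d (fpt 3) (fpt 11)
  · exact hinj.ne (by decide)
  · exact Finset.mem_image_of_mem fpt (Finset.mem_univ _)
  · exact Finset.mem_image_of_mem fpt (Finset.mem_univ _)
  · rw [h, he4, he5, he7, he3]
    refine mem_interior_triangle (α := (5/37 : ℝ)) (β := (41/222 : ℝ)) (γ := (151/222 : ℝ)) (by norm_num) (by norm_num) (by norm_num) (by norm_num) ?_ (by norm_num)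
    norm_num [Prod.smul_mk, Prod.mk_add_mk, Prod.mk.injEq]
  · rw [h, he4, he5, he7, he11]
    refine mem_interior_triangle (α := (2/37 : ℝ)) (β := (3/74 : ℝ)) (γ := (67/74 : ℝ)) (by norm_num) (by norm_num) (by norm_num) (by norm_num) ?_ (by norm_num)
    norm_num [Prod.smul_mk, Prod.mk_add_mk, Prod.mk.injEq]

lemma tri6 : ∀ a b d : ℝ × ℝ, ({a,b,d} : Set (ℝ × ℝ)) = {fpt 4, fpt 6, fpt 7} → 2 ≤ triPts Spts a b d := by
  intro a b d h
  rw [triPts]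
  apply two_le_triPts_aux Spts a b d (fpt 3) (fpt 11)
  · exact hinj.ne (by decide)
  · exact Finset.mem_image_of_mem fpt (Finset.mem_univ _)
  · exact Finset.mem_image_of_mem fpt (Finset.mem_univ _)
  · rw [h, he4, he6, he7, he3]
    refine mem_interior_triangle (α := (71/222 : ℝ)) (β := (41/222 : ℝ)) (γ := (55/111 : ℝ)) (by norm_num) (by norm_num) (by norm_num) (by norm_num) ?_ (by norm_num)
    norm_num [Prod.smul_mk, Prod.mk_add_mk, Prod.mk.injEq]
  · rw [h, he4, he6, he7, he11]
    refine mem_interior_triangle (α := (7/74 : ℝ)) (β := (3/74 : ℝ)) (γ := (32/37 : ℝ)) (by norm_num) (by norm_num) (by norm_num) (by norm_num) ?_ (by norm_num)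
    norm_num [Prod.smul_mk, Prod.mk_add_mk, Prod.mk.injEq]

lemma tri7 : ∀ a b d : ℝ × ℝ, ({a,b,d} : Set (ℝ × ℝ)) = {fpt 5, fpt 6, fpt 7} → 2 ≤ triPts Spts a b d := by
  intro a b d h
  rw [triPts]
  apply two_le_triPts_aux Spts a b d (fpt 1) (fpt 9)
  · exact hinj.ne (by decide)
  · exact Finset.mem_image_of_mem fpt (Finset.mem_univ _)
  · exact Finset.mem_image_of_mem fpt (Finset.mem_univ _)
  · rw [h, he5, he6, he7, he1]
    refine mem_interior_triangle (α := (151/222 : ℝ)) (β := (5/37 : ℝ)) (γ := (41/222 : ℝ)) (by norm_num) (by norm_num) (by norm_num) (by norm_num) ?_ (by norm_num)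
    norm_num [Prod.smul_mk, Prod.mk_add_mk, Prod.mk.injEq]
  · rw [h, he5, he6, he7, he9]
    refine mem_interior_triangle (α := (67/74 : ℝ)) (β := (2/37 : ℝ)) (γ := (3/74 : ℝ)) (by norm_num) (by norm_num) (by norm_num) (by norm_num) ?_ (by norm_num)
    norm_num [Prod.smul_mk, Prod.mk_add_mk, Prod.mk.injEq]

lemma tri8 : ∀ a b d : ℝ × ℝ, ({a,b,d} : Set (ℝ × ℝ)) = {fpt 8, fpt 9, fpt 10} → 2 ≤ triPts Spts a b d := by
  intro a b d h
  rw [triPts]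
  apply two_le_triPts_aux Spts a b d (fpt 1) (fpt 5)
  · exact hinj.ne (by decide)
  · exact Finset.mem_image_of_mem fpt (Finset.mem_univ _)
  · exact Finset.mem_image_of_mem fpt (Finset.mem_univ _)
  · rw [h, he8, he9, he10, he1]
    refine mem_interior_triangle (α := (1/432 : ℝ)) (β := (205/216 : ℝ)) (γ := (7/144 : ℝ)) (by norm_num) (by norm_num) (by norm_num) (by norm_num) ?_ (by norm_num)
    norm_num [Prod.smul_mk, Prod.mk_add_mk, Prod.mk.injEq]
  · rw [h, he8, he9, he10, he5]
    refine mem_interior_triangle (α := (7/144 : ℝ)) (β := (67/72 : ℝ)) (γ := (1/48 : ℝ)) (by norm_num) (by norm_num) (by norm_num) (by norm_num) ?_ (by norm_num)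
    norm_num [Prod.smul_mk, Prod.mk_add_mk, Prod.mk.injEq]

lemma tri9 : ∀ a b d : ℝ × ℝ, ({a,b,d} : Set (ℝ × ℝ)) = {fpt 8, fpt 9, fpt 11} → 2 ≤ triPts Spts a b d := by
  intro a b d h
  rw [triPts]
  apply two_le_triPts_aux Spts a b d (fpt 3) (fpt 5)
  · exact hinj.ne (by decide)
  · exact Finset.mem_image_of_mem fpt (Finset.mem_univ _)
  · exact Finset.mem_image_of_mem fpt (Finset.mem_univ _)
  · rw [h, he8, he9, he11, he3]
    refine mem_interior_triangle (α := (5/108 : ℝ)) (β := (1/432 : ℝ)) (γ := (137/144 : ℝ)) (by norm_num) (by norm_num) (by norm_num) (by norm_num) ?_ (by norm_num)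
    norm_num [Prod.smul_mk, Prod.mk_add_mk, Prod.mk.injEq]
  · rw [h, he8, he9, he11, he5]
    refine mem_interior_triangle (α := (1/36 : ℝ)) (β := (137/144 : ℝ)) (γ := (1/48 : ℝ)) (by norm_num) (by norm_num) (by norm_num) (by norm_num) ?_ (by norm_num)
    norm_num [Prod.smul_mk, Prod.mk_add_mk, Prod.mk.injEq]

lemma tri10 : ∀ a b d : ℝ × ℝ, ({a,b,d} : Set (ℝ × ℝ)) = {fpt 8, fpt 10, fpt 11} → 2 ≤ triPts Spts a b d := by
  intro a b d h
  rw [triPts]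
  apply two_le_triPts_aux Spts a b d (fpt 3) (fpt 7)
  · exact hinj.ne (by decide)
  · exact Finset.mem_image_of_mem fpt (Finset.mem_univ _)
  · exact Finset.mem_image_of_mem fpt (Finset.mem_univ _)
  · rw [h, he8, he10, he11, he3]
    refine mem_interior_triangle (α := (7/144 : ℝ)) (β := (1/432 : ℝ)) (γ := (205/216 : ℝ)) (by norm_num) (by norm_num) (by norm_num) (by norm_num) ?_ (by norm_num)
    norm_num [Prod.smul_mk, Prod.mk_add_mk, Prod.mk.injEq]
  · rw [h, he8, he10, he11, he7]
    refine mem_interior_triangle (α := (1/48 : ℝ)) (β := (7/144 : ℝ)) (γ := (67/72 : ℝ)) (by norm_num) (by norm_num) (by norm_num) (by norm_num) ?_ (by norm_num)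
    norm_num [Prod.smul_mk, Prod.mk_add_mk, Prod.mk.injEq]

lemma tri11 : ∀ a b d : ℝ × ℝ, ({a,b,d} : Set (ℝ × ℝ)) = {fpt 9, fpt 10, fpt 11} → 2 ≤ triPts Spts a b d := by
  intro a b d h
  rw [triPts]
  apply two_le_triPts_aux Spts a b d (fpt 1) (fpt 7)
  · exact hinj.ne (by decide)
  · exact Finset.mem_image_of_mem fpt (Finset.mem_univ _)
  · exact Finset.mem_image_of_mem fpt (Finset.mem_univ _)
  · rw [h, he9, he10, he11, he1]
    refine mem_interior_triangle (α := (137/144 : ℝ)) (β := (5/108 : ℝ)) (γ := (1/432 : ℝ)) (by norm_num) (by norm_num) (by norm_num) (by norm_num) ?_ (by norm_num)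
    norm_num [Prod.smul_mk, Prod.mk_add_mk, Prod.mk.injEq]
  · rw [h, he9, he10, he11, he7]
    refine mem_interior_triangle (α := (1/48 : ℝ)) (β := (1/36 : ℝ)) (γ := (137/144 : ℝ)) (by norm_num) (by norm_num) (by norm_num) (by norm_num) ?_ (by norm_num)
    norm_num [Prod.smul_mk, Prod.mk_add_mk, Prod.mk.injEq]

/-- There is a 3-colored set of 12 points in general position in which every
monochromatic triangle has at least 2 interior points. -/
theorem twelve_points_three_colors_lower :
    ∃ S : Finset (ℝ × ℝ), S.card = 12 ∧ GenPos (S : Set (ℝ × ℝ)) ∧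
      ∃ χ : ℝ × ℝ → Fin 3,
        ∀ a ∈ S, ∀ b ∈ S, ∀ d ∈ S, a ≠ b → a ≠ d → b ≠ d →
          χ a = χ b → χ b = χ d → 2 ≤ triPts S a b d := by
  refine ⟨Spts, ?_, ?_, chi, ?_⟩
  · rw [Spts, Finset.card_image_of_injective _ hinj, Finset.card_univ, Fintype.card_fin]
  · intro p hp q hq r hr hpq hpr hqr
    rw [Finset.mem_coe, Spts, Finset.mem_image] at hp hq hr
    obtain ⟨i, -, rfl⟩ := hp
    obtain ⟨j, -, rfl⟩ := hq
    obtain ⟨k, -, rfl⟩ := hr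
    apply notCollinear_of_det
    have hij : i ≠ j := fun h => hpq (by rw [h])
    have hik : i ≠ k := fun h => hpr (by rw [h])
    have hjk : j ≠ k := fun h => hqr (by rw [h])
    have hd := hdet i j k hij hik hjk
    simp only [fpt]
    intro h0
    exact hd (by exact_mod_cast h0)
  · intro a ha b hb d hd hab had hbd hc1 hc2
    rw [Spts, Finset.mem_image] at ha hb hd
    obtain ⟨i, -, rfl⟩ := ha
    obtain ⟨j, -, rfl⟩ := hb
    obtain ⟨k, -, rfl⟩ := hd
    have hij : i ≠ j := fun h => hab (by rw [h])
    have hik : i ≠ k := fun h => had (by rw [h])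
    have hjk : j ≠ k := fun h => hbd (by rw [h])
    rw [hchi i, hchi j] at hc1
    rw [hchi j, hchi k] at hc2
    have hmem := htriple i j k hij hik hjk hc1 hc2
    simp only [monoList, List.mem_cons, List.not_mem_nil, or_false] at hmem
    rcases hmem with h|h|h|h|h|h|h|h|h|h|h|h
    · exact tri0 _ _ _ (setimg h)
    · exact tri1 _ _ _ (setimg h)
    · exact tri2 _ _ _ (setimg h)
    · exact tri3 _ _ _ (setimg h)
    · exact tri4 _ _ _ (setimg h)
    · exact tri5 _ _ _ (setimg h)
    · exact tri6 _ _ _ (setimg h)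
    · exact tri7 _ _ _ (setimg h)
    · exact tri8 _ _ _ (setimg h)
    · exact tri9 _ _ _ (setimg h)
    · exact tri10 _ _ _ (setimg h)
    · exact tri11 _ _ _ (setimg h)
end
end

section
/- Let H = {h_1, …, h_n} be a Horton set sorted by increasing x-coordinate, with even-indexed points H⁺ and odd-indexed points H⁻. If h_i ∈ H⁺ and h_j ∈ H⁻ (or vice versa) with i < j, then every point of H⁺ with x-coordinate strictly between those of h_i and h_j lies above the line through h_i and h_j, and every such point of H⁻ lies below that line. -/
open scoped Classical

noncomputable section

/-- The elements at even positions (0-based: positions 0,2,4,…) of a list. -/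
def everyOther : List (ℝ × ℝ) → List (ℝ × ℝ)
  | [] => []
  | [a] => [a]
  | a :: _ :: l => a :: everyOther l

/-- A list of points sorted by strictly increasing x-coordinate. -/
def SortedX (l : List (ℝ × ℝ)) : Prop := l.Pairwise (fun p q => p.1 < q.1)

/-- `p` lies strictly above the (non-vertical) line through `a` and `b`. -/
def AboveLine (a b p : ℝ × ℝ) : Prop :=
  a.2 + (b.2 - a.2) / (b.1 - a.1) * (p.1 - a.1) < p.2

/-- `p` lies strictly below the (non-vertical) line through `a` and `b`. -/
def BelowLine (a b p : ℝ × ℝ) : Prop :=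
  p.2 < a.2 + (b.2 - a.2) / (b.1 - a.1) * (p.1 - a.1)

/-- Horton sets, as lists sorted by x-coordinate. For a list `l`, the odd points
`H⁻` are `everyOther l` (1-indexed positions 1,3,5,…) and the even points `H⁺` are
`everyOther l.tail` (positions 2,4,6,…). Both parts are recursively Horton, every
line through two points of `H⁺` leaves all of `H⁻` strictly below it, and every
line through two points of `H⁻` leaves all of `H⁺` strictly above it. -/
inductive IsHorton : List (ℝ × ℝ) → Prop where
  | small : ∀ l : List (ℝ × ℝ), l.length ≤ 2 → SortedX l → IsHorton l
  | step : ∀ l : List (ℝ × ℝ), SortedX l → 3 ≤ l.length →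
      IsHorton (everyOther l) → IsHorton (everyOther l.tail) →
      (∀ a ∈ everyOther l.tail, ∀ b ∈ everyOther l.tail, a ≠ b →
        ∀ p ∈ everyOther l, BelowLine a b p) →
      (∀ a ∈ everyOther l, ∀ b ∈ everyOther l, a ≠ b →
        ∀ p ∈ everyOther l.tail, AboveLine a b p) →
      IsHorton l

/-!
For `a.1 < p.1 < b.1`, "`p` above the line `a b`", "`b` below the line `a p`" and "`a` below the
line `p b`" all say that the triangle `a b p` is positively oriented (and dually for "below").
So each claim is one of the two separation properties of the Horton set, applied to the line
through `p` and whichever of `hi`, `hj` lies in the same part as `p`. A Horton set with at most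
two points has no point strictly between two of its points.
-/

/-- Twice the signed area of the triangle `a b p`; positive iff it is counterclockwise. -/
def orient (a b p : ℝ × ℝ) : ℝ :=
  (b.1 - a.1) * (p.2 - a.2) - (b.2 - a.2) * (p.1 - a.1)

section Orientation

variable {a b p : ℝ × ℝ}

lemma orient_swap_right : orient a p b = -orient a b p := by
  unfold orient; ring

lemma orient_swap_left : orient p b a = -orient a b p := by
  unfold orient; ring

lemma aboveLine_iff_orient_pos (hab : a.1 < b.1) : AboveLine a b p ↔ 0 < orient a b p := by
  rw [AboveLine, orient, div_mul_eq_mul_div, ← lt_sub_iff_add_lt', div_lt_iff₀ (sub_pos.2 hab),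
    sub_pos, mul_comm (p.2 - a.2)]

lemma belowLine_iff_orient_neg (hab : a.1 < b.1) : BelowLine a b p ↔ orient a b p < 0 := by
  rw [BelowLine, orient, div_mul_eq_mul_div, ← sub_lt_iff_lt_add', lt_div_iff₀ (sub_pos.2 hab),
    sub_neg, mul_comm (p.2 - a.2)]

lemma belowLine_swap_right_iff (hap : a.1 < p.1) (hab : a.1 < b.1) :
    BelowLine a p b ↔ AboveLine a b p := by
  rw [belowLine_iff_orient_neg hap, aboveLine_iff_orient_pos hab, orient_swap_right, neg_lt_zero]

lemma belowLine_swap_left_iff (hpb : p.1 < b.1) (hab : a.1 < b.1) :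
    BelowLine p b a ↔ AboveLine a b p := by
  rw [belowLine_iff_orient_neg hpb, aboveLine_iff_orient_pos hab, orient_swap_left, neg_lt_zero]

lemma aboveLine_swap_right_iff (hap : a.1 < p.1) (hab : a.1 < b.1) :
    AboveLine a p b ↔ BelowLine a b p := by
  rw [aboveLine_iff_orient_pos hap, belowLine_iff_orient_neg hab, orient_swap_right, neg_pos]

lemma aboveLine_swap_left_iff (hpb : p.1 < b.1) (hab : a.1 < b.1) :
    AboveLine p b a ↔ BelowLine a b p := by
  rw [aboveLine_iff_orient_pos hpb, belowLine_iff_orient_neg hab, orient_swap_left, neg_pos]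

end Orientation

lemma everyOther_sublist (l : List (ℝ × ℝ)) : (everyOther l).Sublist l := by
  induction l using everyOther.induct with
  | case1 => exact List.Sublist.slnil
  | case2 a => exact List.Sublist.refl _
  | case3 a b l ih => exact (ih.cons _).cons_cons a

lemma not_fst_lt_lt_of_length_le_two {l : List (ℝ × ℝ)} (hl : l.length ≤ 2)
    {a p b : ℝ × ℝ} (ha : a ∈ l) (hp : p ∈ l) (hb : b ∈ l) (hap : a.1 < p.1)
    (hpb : p.1 < b.1) : False := by
  match l, hl with
  | [], _ => simp at ha
  | [_], _ =>
    simp only [List.mem_singleton] at ha hp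
    subst ha hp
    exact hap.false
  | [_, _], _ =>
    simp only [List.mem_cons, List.not_mem_nil, or_false] at ha hp hb
    rcases ha with rfl | rfl <;> rcases hp with rfl | rfl <;> rcases hb with rfl | rfl <;>
      linarith

/-- In a Horton set `l` (with even points `H⁺ = everyOther l.tail` and odd points
`H⁻ = everyOther l`), if `hi` and `hj` belong to different parts, then every point of
`H⁺` with x-coordinate strictly between those of `hi` and `hj` lies strictly above the
line through `hi` and `hj`, and every such point of `H⁻` lies strictly below it. -/
theorem horton_between_above_below (l : List (ℝ × ℝ)) (hH : IsHorton l)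
    (hi hj : ℝ × ℝ)
    (hmem : (hi ∈ everyOther l.tail ∧ hj ∈ everyOther l) ∨
            (hi ∈ everyOther l ∧ hj ∈ everyOther l.tail))
    (hx : hi.1 < hj.1) :
    (∀ p ∈ everyOther l.tail, hi.1 < p.1 → p.1 < hj.1 → AboveLine hi hj p) ∧
    (∀ p ∈ everyOther l, hi.1 < p.1 → p.1 < hj.1 → BelowLine hi hj p) := by
  cases hH with
  | small l hlen _ =>
    have mem {q} (hq : q ∈ everyOther l) : q ∈ l := (everyOther_sublist _).subset hq
    have mem_tail {q} (hq : q ∈ everyOther l.tail) : q ∈ l :=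
      List.mem_of_mem_tail ((everyOther_sublist _).subset hq)
    obtain ⟨hil, hjl⟩ : hi ∈ l ∧ hj ∈ l := by
      rcases hmem with ⟨hiE, hjO⟩ | ⟨hiO, hjE⟩
      exacts [⟨mem_tail hiE, mem hjO⟩, ⟨mem hiO, mem_tail hjE⟩]
    exact ⟨fun p hp h1 h2 =>
        (not_fst_lt_lt_of_length_le_two hlen hil (mem_tail hp) hjl h1 h2).elim,
      fun p hp h1 h2 => (not_fst_lt_lt_of_length_le_two hlen hil (mem hp) hjl h1 h2).elim⟩
  | step l _ _ _ _ hBelow hAbove =>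
    have ne {a b : ℝ × ℝ} (h : a.1 < b.1) : a ≠ b := ne_of_apply_ne Prod.fst h.ne
    rcases hmem with ⟨hiE, hjO⟩ | ⟨hiO, hjE⟩
    · exact ⟨fun p hp h1 _ =>
          (belowLine_swap_right_iff h1 hx).1 (hBelow hi hiE p hp (ne h1) hj hjO),
        fun p hp _ h2 => (aboveLine_swap_left_iff h2 hx).1 (hAbove p hp hj hjO (ne h2) hi hiE)⟩
    · exact ⟨fun p hp _ h2 =>
          (belowLine_swap_left_iff h2 hx).1 (hBelow p hp hj hjE (ne h2) hi hiO),
        fun p hp h1 _ => (aboveLine_swap_right_iff h1 hx).1 (hAbove hi hiO p hp (ne h1) hj hjE)⟩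
end
end

section
/- For every q ≥ 1 and every n, there exists a set of n points in the plane in general position together with a (2q+1)-coloring such that every monochromatic triangle contains at least q points of the set in its interior. -/
open scoped Classical

noncomputable section

/-!
Take the points `(i, y i)`, `i < n`, with `y i = ∑ b, W ^ (n - b) * bit b i` for a base
`W > 2 n²`, so that low-order bits dominate the heights, and color `i` by `i mod (2q+1)`.
The orientation of three of these points has the sign of its leading digit: the orientation of
the points `(i, bit t i)` at the first bit `t` where the three indices do not all agree; this
gives general position. For a monochromatic triple, two indices `u < v` agree at bit `t` while
the third index `w` does not, and `v - u = 2 ^ t' * m` with `t < t'` and `m` odd and divisible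
by `2q+1`, so `m ≥ 2q+1`. Reading off the leading digits, every `u + 2 ^ t' * s` with `0 < s < m`
whose bit `t'` equals bit `t` of `w` lies inside the triangle, and there are at least `q` such `s`.
-/

open Finset

namespace Nat

lemma modEq_two_pow_iff_testBit {a b k : ℕ} :
    a ≡ b [MOD 2 ^ k] ↔ ∀ i < k, a.testBit i = b.testBit i := by
  refine ⟨fun h i hi => ?_, fun h => eq_of_testBit_eq fun i => ?_⟩
  · simpa [hi] using congrArg (testBit · i) h
  · by_cases hi : i < k <;> simp [hi, h]

lemma modEq_two_pow_succ_iff {a b k : ℕ} :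
    a ≡ b [MOD 2 ^ (k + 1)] ↔ a ≡ b [MOD 2 ^ k] ∧ a.testBit k = b.testBit k := by
  simp only [modEq_two_pow_iff_testBit, Nat.lt_succ_iff_lt_or_eq, or_imp, forall_and,
    forall_eq]

lemma testBit_add_two_pow_mul (a k s : ℕ) :
    (a + 2 ^ k * s).testBit k = (a.testBit k ^^ decide (Odd s)) := by
  rw [testBit_eq_decide_div_mod_eq, testBit_eq_decide_div_mod_eq,
    add_mul_div_left _ _ (Nat.two_pow_pos k)]
  rcases mod_two_eq_zero_or_one (a / 2 ^ k) with h | h <;>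
    rcases mod_two_eq_zero_or_one s with hs | hs <;> simp [Nat.add_mod, h, hs, Nat.odd_iff]

lemma exists_modEq_two_pow_not_testBit {A B C : ℕ} (hAB : A ≠ B) :
    ∃ τ, A ≡ B [MOD 2 ^ τ] ∧ B ≡ C [MOD 2 ^ τ] ∧
      ¬ (A.testBit τ = B.testBit τ ∧ B.testBit τ = C.testBit τ) := by
  have hex : ∃ τ, ¬ (A.testBit τ = B.testBit τ ∧ B.testBit τ = C.testBit τ) := by
    by_contra! h
    exact hAB (eq_of_testBit_eq fun i => (h i).1)
  refine ⟨Nat.find hex, ?_, ?_, Nat.find_spec hex⟩ <;> rw [modEq_two_pow_iff_testBit] <;>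
    intro i hi <;> have := Nat.find_min hex hi <;> tauto

lemma exists_eq_add_two_pow_mul_odd {u v t r : ℕ} (h : u < v) (hr : Odd r)
    (h2 : u ≡ v [MOD 2 ^ (t + 1)]) (hr' : u ≡ v [MOD r]) :
    ∃ t' m, v = u + 2 ^ t' * m ∧ Odd m ∧ t < t' ∧ r ≤ m := by
  obtain ⟨t', m, hm, hvum⟩ := exists_eq_two_pow_mul_odd (Nat.sub_ne_zero_of_lt h)
  refine ⟨t', m, by omega, hm, ?_, ?_⟩
  · have h2' : 2 ^ (t + 1) ∣ 2 ^ t' * m := hvum ▸ (modEq_iff_dvd' h.le).1 h2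
    exact (pow_dvd_pow_iff_le_right one_lt_two).1
      ((Coprime.pow_left _ (coprime_two_left.2 hm)).dvd_of_dvd_mul_right h2')
  · have hr'' : r ∣ 2 ^ t' * m := hvum ▸ (modEq_iff_dvd' h.le).1 hr'
    exact le_of_dvd hm.pos ((Coprime.pow_right _ hr.coprime_two_right).dvd_of_dvd_mul_left hr'')

end Nat

section LeadingDigit

variable {R : Type*} [CommRing R] [LinearOrder R] [IsStrictOrderedRing R]

lemma sum_pow_mul_pos_of_leading {c : ℕ → R} {W K : R} {n τ : ℕ} (hc : ∀ b < n, |c b| ≤ K)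
    (hW : n * K < W) (hτn : τ < n) (hlow : ∀ b < τ, c b = 0) (hτ : 1 ≤ c τ) :
    0 < ∑ b ∈ range n, W ^ (n - b) * c b := by
  have hK : 1 ≤ K := hτ.trans ((le_abs_self _).trans (hc τ hτn))
  have hW1 : 1 ≤ W := by
    have : (1 : R) ≤ n := by exact_mod_cast hτn.pos
    nlinarith
  have hsplit : ∑ b ∈ range n, W ^ (n - b) * c b =
      W ^ (n - τ) * c τ + ∑ b ∈ Ico (τ + 1) n, W ^ (n - b) * c b := by
    rw [← sum_range_add_sum_Ico _ hτn.le, sum_eq_sum_Ico_succ_bot hτn,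
      sum_eq_zero fun b hb => by rw [hlow b (mem_range.1 hb), mul_zero], zero_add]
  have htail : |∑ b ∈ Ico (τ + 1) n, W ^ (n - b) * c b| ≤ n * K * W ^ (n - (τ + 1)) :=
    calc |∑ b ∈ Ico (τ + 1) n, W ^ (n - b) * c b|
        ≤ ∑ b ∈ Ico (τ + 1) n, W ^ (n - (τ + 1)) * K := by
          refine (abs_sum_le_sum_abs _ _).trans (sum_le_sum fun b hb => ?_)
          obtain ⟨hτb, hbn⟩ := mem_Ico.1 hb
          rw [abs_mul, abs_of_pos (pow_pos (by linarith) _)]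
          exact mul_le_mul (pow_le_pow_right₀ hW1 (by omega)) (hc b hbn) (abs_nonneg _)
            (by positivity)
      _ ≤ n * K * W ^ (n - (τ + 1)) := by
          rw [sum_const, Nat.card_Ico, nsmul_eq_mul]
          have : ((n - (τ + 1) : ℕ) : R) ≤ n := by exact_mod_cast Nat.sub_le n (τ + 1)
          have := mul_le_mul_of_nonneg_right this
            (by positivity : (0 : R) ≤ W ^ (n - (τ + 1)) * K)
          linarith
  have hlead : W ^ (n - τ) = W * W ^ (n - (τ + 1)) := by
    rw [← pow_succ']; congr 1; omega
  have hpow : 0 < W ^ (n - (τ + 1)) := pow_pos (by linarith) _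
  have h1 : W ^ (n - τ) ≤ W ^ (n - τ) * c τ := le_mul_of_one_le_right (by positivity) hτ
  have h2 : n * K * W ^ (n - (τ + 1)) < W * W ^ (n - (τ + 1)) := mul_lt_mul_of_pos_right hW hpow
  rw [hsplit]
  linarith [neg_abs_le (∑ b ∈ Ico (τ + 1) n, W ^ (n - b) * c b)]

lemma sign_sum_pow_mul_eq_sign_leading {c : ℕ → R} {W K : R} {n τ : ℕ}
    (hc : ∀ b < n, |c b| ≤ K) (hW : n * K < W) (hτn : τ < n) (hlow : ∀ b < τ, c b = 0)
    (hτ : 1 ≤ |c τ|) :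
    SignType.sign (∑ b ∈ range n, W ^ (n - b) * c b) = SignType.sign (c τ) := by
  rcases le_or_gt 0 (c τ) with hpos | hneg
  · rw [abs_of_nonneg hpos] at hτ
    rw [sign_pos (sum_pow_mul_pos_of_leading hc hW hτn hlow hτ), sign_pos (by linarith)]
  · rw [abs_of_neg hneg] at hτ
    have h := sum_pow_mul_pos_of_leading (c := fun b => -c b) (by simpa using hc) hW hτn
      (by simpa using hlow) hτ
    simp only [mul_neg, sum_neg_distrib, neg_pos] at h
    rw [sign_neg h, sign_neg hneg]

end LeadingDigit

namespace Horton

def orient (a b c : ℝ × ℝ) : ℝ :=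
  (b.1 - a.1) * (c.2 - a.2) - (c.1 - a.1) * (b.2 - a.2)

lemma orient_rotate (a b c : ℝ × ℝ) : orient a b c = orient b c a := by
  unfold orient; ring

lemma orient_of_snd_eq (x₁ x₂ x₃ y y' : ℝ) :
    orient (x₁, y) (x₂, y) (x₃, y') = (x₂ - x₁) * (y' - y) := by
  unfold orient; ring

lemma continuous_orient (a b : ℝ × ℝ) : Continuous (orient a b) := by
  unfold orient; fun_prop

lemma not_collinear_of_orient_ne_zero {a b c : ℝ × ℝ} (h : orient a b c ≠ 0) :
    ¬ Collinear ℝ ({a, b, c} : Set (ℝ × ℝ)) := by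
  rw [collinear_iff_exists_forall_eq_smul_vadd]
  rintro ⟨p₀, v, hv⟩
  obtain ⟨ra, rfl⟩ := hv a (by simp)
  obtain ⟨rb, rfl⟩ := hv b (by simp)
  obtain ⟨rc, rfl⟩ := hv c (by simp)
  apply h
  simp only [orient, vadd_eq_add, Prod.fst_add, Prod.snd_add, Prod.smul_fst, Prod.smul_snd,
    smul_eq_mul]
  ring

-- Barycentric coordinates: `orient b c z • a + orient c a z • b + orient a b z • c =
-- orient a b c • z`.
lemma mem_convexHull_of_orient_pos {a b c z : ℝ × ℝ} (h : 0 < orient a b c)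
    (ha : 0 ≤ orient b c z) (hb : 0 ≤ orient c a z) (hc : 0 ≤ orient a b z) :
    z ∈ convexHull ℝ ({a, b, c} : Set (ℝ × ℝ)) := by
  set D := orient a b c
  have hsum : orient b c z / D + orient c a z / D + orient a b z / D = 1 := by
    field_simp; unfold D orient; ring
  have hz : (orient b c z / D) • a + (orient c a z / D) • b + (orient a b z / D) • c = z := by
    ext <;> simp only [Prod.fst_add, Prod.snd_add, Prod.smul_fst, Prod.smul_snd, smul_eq_mul] <;>
      field_simp <;> unfold D orient <;> ring
  have hmem := (convex_convexHull ℝ ({a, b, c} : Set (ℝ × ℝ))).sum_mem (t := univ)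
    (w := ![orient b c z / D, orient c a z / D, orient a b z / D]) (z := ![a, b, c])
    (by intro i _; fin_cases i <;> simp <;> positivity)
    (by simpa [Fin.sum_univ_three] using hsum)
    (by intro i _; fin_cases i <;> apply subset_convexHull <;> simp)
  simpa [Fin.sum_univ_three, hz] using hmem

lemma mem_interior_convexHull_of_orient_pos {a b c p : ℝ × ℝ} (h : 0 < orient a b c)
    (ha : 0 < orient b c p) (hb : 0 < orient c a p) (hc : 0 < orient a b p) :
    p ∈ interior (convexHull ℝ ({a, b, c} : Set (ℝ × ℝ))) := by
  let U : Set (ℝ × ℝ) := orient b c ⁻¹' Set.Ioi 0 ∩ orient c a ⁻¹' Set.Ioi 0 ∩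
    orient a b ⁻¹' Set.Ioi 0
  have hU : IsOpen U := by
    refine ((isOpen_Ioi.preimage ?_).inter (isOpen_Ioi.preimage ?_)).inter
      (isOpen_Ioi.preimage ?_) <;> exact continuous_orient _ _
  refine mem_interior.mpr ⟨U, ?_, hU, ⟨⟨ha, hb⟩, hc⟩⟩
  rintro z ⟨⟨hza, hzb⟩, hzc⟩
  exact mem_convexHull_of_orient_pos h (le_of_lt hza) (le_of_lt hzb) (le_of_lt hzc)

lemma mem_interior_convexHull_of_sign_orient {a b c p : ℝ × ℝ} (h : orient a b c ≠ 0)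
    (ha : SignType.sign (orient b c p) = SignType.sign (orient a b c))
    (hb : SignType.sign (orient c a p) = SignType.sign (orient a b c))
    (hc : SignType.sign (orient a b p) = SignType.sign (orient a b c)) :
    p ∈ interior (convexHull ℝ ({a, b, c} : Set (ℝ × ℝ))) := by
  rcases h.lt_or_gt with hneg | hpos
  · rw [sign_neg hneg, sign_eq_neg_one_iff] at ha hb hc
    rw [Set.pair_comm b c]
    refine mem_interior_convexHull_of_orient_pos ?_ ?_ ?_ ?_ <;> unfold orient at * <;> linarith
  · rw [sign_pos hpos, sign_eq_one_iff] at ha hb hc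
    exact mem_interior_convexHull_of_orient_pos hpos ha hb hc

-- Any base above `n * (2 * n)` works: `2 * n` bounds every digit orientation.
def hortonBase (n : ℕ) : ℝ := 2 * n ^ 2 + 1

def digit (i b : ℕ) : ℝ := if i.testBit b then 1 else 0

def digitPt (b i : ℕ) : ℝ × ℝ := (i, digit i b)

def hortonPt (n i : ℕ) : ℝ × ℝ := (i, ∑ b ∈ range n, hortonBase n ^ (n - b) * digit i b)

lemma hortonPt_injective (n : ℕ) : Function.Injective (hortonPt n) := fun _ _ h => by
  simpa [hortonPt] using congrArg Prod.fst h

lemma digit_eq_of_testBit_eq {i j b c : ℕ} (h : i.testBit b = j.testBit c) :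
    digit i b = digit j c := by
  simp [digit, h]

lemma abs_digit_sub_digit {i j b c : ℕ} (h : i.testBit b ≠ j.testBit c) :
    |digit i b - digit j c| = 1 := by
  unfold digit
  cases hi : i.testBit b <;> cases hj : j.testBit c <;> simp_all

lemma abs_digit_sub_digit_le (i j b : ℕ) : |digit i b - digit j b| ≤ 1 := by
  unfold digit; split_ifs <;> norm_num

lemma orient_digitPt_of_modEq {A B C x τ b : ℕ} (hb : b < τ) (hA : A ≡ x [MOD 2 ^ τ])
    (hB : B ≡ x [MOD 2 ^ τ]) (hC : C ≡ x [MOD 2 ^ τ]) :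
    orient (digitPt b A) (digitPt b B) (digitPt b C) = 0 := by
  rw [Nat.modEq_two_pow_iff_testBit] at hA hB hC
  simp only [digitPt, digit_eq_of_testBit_eq (hA b hb), digit_eq_of_testBit_eq (hB b hb),
    digit_eq_of_testBit_eq (hC b hb), orient_of_snd_eq, sub_self, mul_zero]

lemma abs_orient_digitPt_le {n A B C : ℕ} (hA : A < n) (hB : B < n) (hC : C < n) (b : ℕ) :
    |orient (digitPt b A) (digitPt b B) (digitPt b C)| ≤ 2 * n := by
  have hx : ∀ i j : ℕ, i < n → j < n → |(i : ℝ) - j| ≤ n := fun i j hi hj => by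
    rw [abs_le]; constructor <;> push_cast [← Nat.cast_lt (α := ℝ)] at hi hj ⊢ <;> linarith
  unfold orient digitPt
  calc _ ≤ |((B : ℝ) - A) * (digit C b - digit A b)| + |((C : ℝ) - A) * (digit B b - digit A b)| :=
        abs_sub _ _
    _ ≤ n * 1 + n * 1 := by
        rw [abs_mul, abs_mul]
        gcongr
        exacts [hx B A hB hA, abs_digit_sub_digit_le C A b, hx C A hC hA,
          abs_digit_sub_digit_le B A b]
    _ = 2 * n := by ring

lemma orient_hortonPt (n A B C : ℕ) :
    orient (hortonPt n A) (hortonPt n B) (hortonPt n C) =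
      ∑ b ∈ range n, hortonBase n ^ (n - b) * orient (digitPt b A) (digitPt b B) (digitPt b C) := by
  simp only [orient, hortonPt, digitPt, ← sum_sub_distrib, mul_sum]
  exact sum_congr rfl fun b _ => by ring

lemma sign_orient_hortonPt {n A B C x τ : ℕ} (hA : A < n) (hB : B < n) (hC : C < n)
    (hAx : A ≡ x [MOD 2 ^ τ]) (hBx : B ≡ x [MOD 2 ^ τ]) (hCx : C ≡ x [MOD 2 ^ τ])
    (hτ : 1 ≤ |orient (digitPt τ A) (digitPt τ B) (digitPt τ C)|) :
    SignType.sign (orient (hortonPt n A) (hortonPt n B) (hortonPt n C)) =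
      SignType.sign (orient (digitPt τ A) (digitPt τ B) (digitPt τ C)) := by
  have hτn : τ < n := by
    by_contra! hnτ
    have hzero : ∀ i < n, i.testBit τ = false := fun i hi =>
      Nat.testBit_lt_two_pow (hi.trans_le (Nat.lt_two_pow_self.le.trans
        (Nat.pow_le_pow_right two_pos hnτ)))
    simp [digitPt, digit, hzero A hA, hzero B hB, hzero C hC, orient] at hτ
    linarith
  rw [orient_hortonPt]
  refine sign_sum_pow_mul_eq_sign_leading (fun b _ => abs_orient_digitPt_le hA hB hC b) ?_ hτn
    (fun b hb => orient_digitPt_of_modEq hb hAx hBx hCx) hτ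
  unfold hortonBase
  nlinarith

lemma orient_digitPt_of_modEq_succ {u v w τ : ℕ} (huv : u ≡ v [MOD 2 ^ (τ + 1)]) :
    orient (digitPt τ u) (digitPt τ v) (digitPt τ w) = ((v : ℝ) - u) * (digit w τ - digit u τ) := by
  rw [digitPt, digitPt, digit_eq_of_testBit_eq (Nat.modEq_two_pow_succ_iff.1 huv).2.symm,
    orient_of_snd_eq]
  rfl

lemma sign_orient_hortonPt_of_eq_mul {n A B C x τ : ℕ} {k ε : ℝ} (hA : A < n) (hB : B < n)
    (hC : C < n) (hAx : A ≡ x [MOD 2 ^ τ]) (hBx : B ≡ x [MOD 2 ^ τ]) (hCx : C ≡ x [MOD 2 ^ τ])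
    (heq : orient (digitPt τ A) (digitPt τ B) (digitPt τ C) = k * ε) (hk : 1 ≤ k)
    (hε : |ε| = 1) :
    SignType.sign (orient (hortonPt n A) (hortonPt n B) (hortonPt n C)) = SignType.sign ε := by
  rw [sign_orient_hortonPt hA hB hC hAx hBx hCx (by rwa [heq, abs_mul, hε, mul_one,
    abs_of_pos (by linarith)]), heq, sign_mul, sign_pos (by linarith : 0 < k), one_mul]

lemma exists_rotation_split {A B C : ℕ} (hAB : A ≠ B) :
    ∃ u v w τ, ((u = A ∧ v = B ∧ w = C) ∨ (u = B ∧ v = C ∧ w = A) ∨ (u = C ∧ v = A ∧ w = B)) ∧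
      u ≡ v [MOD 2 ^ (τ + 1)] ∧ w ≡ u [MOD 2 ^ τ] ∧ w.testBit τ ≠ u.testBit τ := by
  obtain ⟨τ, hABτ, hBCτ, hsplit⟩ := Nat.exists_modEq_two_pow_not_testBit (C := C) hAB
  simp only [Nat.modEq_two_pow_succ_iff]
  by_cases h₁ : A.testBit τ = B.testBit τ
  · exact ⟨A, B, C, τ, .inl ⟨rfl, rfl, rfl⟩, ⟨hABτ, h₁⟩, (hABτ.trans hBCτ).symm, by grind⟩
  by_cases h₂ : B.testBit τ = C.testBit τ
  · exact ⟨B, C, A, τ, .inr (.inl ⟨rfl, rfl, rfl⟩), ⟨hBCτ, h₂⟩, hABτ, h₁⟩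
  · exact ⟨C, A, B, τ, .inr (.inr ⟨rfl, rfl, rfl⟩), ⟨(hABτ.trans hBCτ).symm, by grind⟩, hBCτ,
      h₂⟩

lemma orient_hortonPt_ne_zero_of_split {n u v w τ : ℕ} (hu : u < n) (hv : v < n) (hw : w < n)
    (huv : u ≠ v) (hsplit : u ≡ v [MOD 2 ^ (τ + 1)]) (hwu : w ≡ u [MOD 2 ^ τ])
    (hwτ : w.testBit τ ≠ u.testBit τ) :
    orient (hortonPt n u) (hortonPt n v) (hortonPt n w) ≠ 0 := by
  have hvu : (1 : ℤ) ≤ |(v : ℤ) - u| :=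
    Int.one_le_abs (sub_ne_zero.2 (by exact_mod_cast huv.symm))
  have habs : 1 ≤ |orient (digitPt τ u) (digitPt τ v) (digitPt τ w)| := by
    rw [orient_digitPt_of_modEq_succ hsplit, abs_mul, abs_digit_sub_digit hwτ, mul_one]
    exact_mod_cast hvu
  rw [← sign_ne_zero, sign_orient_hortonPt hu hv hw rfl
    (hsplit.symm.of_dvd (pow_dvd_pow 2 τ.le_succ)) hwu habs, sign_ne_zero]
  exact fun h0 => by norm_num [h0] at habs

lemma orient_hortonPt_ne_zero {n A B C : ℕ} (hA : A < n) (hB : B < n) (hC : C < n)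
    (hAB : A ≠ B) (hBC : B ≠ C) (hCA : C ≠ A) :
    orient (hortonPt n A) (hortonPt n B) (hortonPt n C) ≠ 0 := by
  obtain ⟨u, v, w, τ, hrot, huv, hwu, hwτ⟩ := exists_rotation_split (C := C) hAB
  rcases hrot with ⟨rfl, rfl, rfl⟩ | ⟨rfl, rfl, rfl⟩ | ⟨rfl, rfl, rfl⟩
  · exact orient_hortonPt_ne_zero_of_split hA hB hC hAB huv hwu hwτ
  · rw [orient_rotate]; exact orient_hortonPt_ne_zero_of_split hB hC hA hBC huv hwu hwτ
  · rw [← orient_rotate]; exact orient_hortonPt_ne_zero_of_split hC hA hB hCA huv hwu hwτ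

lemma sign_orient_hortonPt_of_testBit_eq {n u v l w t t' : ℕ} (hul : u < l) (hlv : l < v)
    (hv : v < n) (hvu : v ≡ u [MOD 2 ^ t']) (hvt' : v.testBit t' ≠ u.testBit t')
    (hlu : l ≡ u [MOD 2 ^ t']) (hlt' : l.testBit t' = w.testBit t)
    (hwt : w.testBit t ≠ u.testBit t) :
    SignType.sign (orient (hortonPt n u) (hortonPt n v) (hortonPt n l)) =
      SignType.sign (digit w t - digit u t) := by
  have hl : l < n := hlv.trans hv
  have hu : u < n := hul.trans hl
  have hε : |digit w t - digit u t| = 1 := abs_digit_sub_digit hwt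
  by_cases h : u.testBit t' = w.testBit t
  · have hvt' : v.testBit t' = u.testBit t := by grind
    refine sign_orient_hortonPt_of_eq_mul hu hv hl rfl hvu hlu (k := l - u) ?_
      (le_sub_iff_add_le'.2 (by exact_mod_cast hul)) hε
    rw [← orient_rotate]
    simp only [digitPt, digit_eq_of_testBit_eq (hlt'.trans h.symm), orient_of_snd_eq,
      digit_eq_of_testBit_eq hvt', digit_eq_of_testBit_eq h]
    ring
  · have hvt' : v.testBit t' = w.testBit t := by grind
    have hut' : u.testBit t' = u.testBit t := by grind
    refine sign_orient_hortonPt_of_eq_mul hu hv hl rfl hvu hlu (k := v - l) ?_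
      (le_sub_iff_add_le'.2 (by exact_mod_cast hlv)) hε
    rw [orient_rotate]
    simp only [digitPt, digit_eq_of_testBit_eq (hlt'.trans hvt'.symm), orient_of_snd_eq,
      digit_eq_of_testBit_eq hvt', digit_eq_of_testBit_eq hut']
    ring

lemma hortonPt_mem_interior {n u v w l t t' : ℕ} (hul : u < l) (hlv : l < v) (hv : v < n)
    (hw : w < n) (htt' : t < t') (hwu : w ≡ u [MOD 2 ^ t]) (hwt : w.testBit t ≠ u.testBit t)
    (hvu : v ≡ u [MOD 2 ^ t']) (hvt' : v.testBit t' ≠ u.testBit t')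
    (hlu : l ≡ u [MOD 2 ^ t']) (hlt' : l.testBit t' = w.testBit t) :
    hortonPt n l ∈ interior (convexHull ℝ {hortonPt n u, hortonPt n v, hortonPt n w}) := by
  have hl : l < n := hlv.trans hv
  have hu : u < n := hul.trans hl
  have hdvd : 2 ^ t ∣ 2 ^ t' := pow_dvd_pow 2 htt'.le
  have hvt : digit v t = digit u t :=
    digit_eq_of_testBit_eq (Nat.modEq_two_pow_iff_testBit.1 hvu t htt')
  have hlt : digit l t = digit u t :=
    digit_eq_of_testBit_eq (Nat.modEq_two_pow_iff_testBit.1 hlu t htt')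
  -- at its leading digit, each orientation below is a positive multiple of `ε`
  set ε := digit w t - digit u t with hεdef
  have hε : |ε| = 1 := abs_digit_sub_digit hwt
  have hlu' : (1 : ℝ) ≤ l - u := le_sub_iff_add_le'.2 (by exact_mod_cast hul)
  have hvl' : (1 : ℝ) ≤ v - l := le_sub_iff_add_le'.2 (by exact_mod_cast hlv)
  have huvw : SignType.sign (orient (hortonPt n u) (hortonPt n v) (hortonPt n w)) =
      SignType.sign ε := by
    refine sign_orient_hortonPt_of_eq_mul hu hv hw rfl (hvu.of_dvd hdvd) hwu
      (k := v - u) ?_ (by linarith) hε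
    simp only [digitPt, hvt, orient_of_snd_eq, hεdef]
  have hvwl : SignType.sign (orient (hortonPt n v) (hortonPt n w) (hortonPt n l)) =
      SignType.sign ε := by
    refine sign_orient_hortonPt_of_eq_mul hv hw hl (hvu.of_dvd hdvd) hwu (hlu.of_dvd hdvd)
      (k := v - l) ?_ hvl' hε
    rw [← orient_rotate]
    simp only [digitPt, hvt, hlt, orient_of_snd_eq, hεdef]
  have hwul : SignType.sign (orient (hortonPt n w) (hortonPt n u) (hortonPt n l)) =
      SignType.sign ε := by
    refine sign_orient_hortonPt_of_eq_mul hw hu hl hwu rfl (hlu.of_dvd hdvd)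
      (k := l - u) ?_ hlu' hε
    rw [orient_rotate]
    simp only [digitPt, hlt, orient_of_snd_eq, hεdef]
  have huvl := sign_orient_hortonPt_of_testBit_eq hul hlv hv hvu hvt' hlu hlt' hwt
  have hε0 : SignType.sign ε ≠ 0 := sign_ne_zero.2 fun h => by norm_num [h] at hε
  refine mem_interior_convexHull_of_sign_orient (sign_ne_zero.1 (huvw ▸ hε0)) ?_ ?_ ?_
  · rw [hvwl, huvw]
  · rw [hwul, huvw]
  · rw [huvl, huvw]

lemma triPts_swap (S : Finset (ℝ × ℝ)) (a b c : ℝ × ℝ) : triPts S a b c = triPts S b a c := by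
  rw [triPts, triPts, Set.insert_comm]

lemma triPts_rotate (S : Finset (ℝ × ℝ)) (a b c : ℝ × ℝ) : triPts S a b c = triPts S b c a := by
  rw [triPts, triPts, Set.insert_comm, Set.pair_comm]

lemma le_triPts_of_split {q n u v w t : ℕ} (hu : u < n) (hv : v < n) (hw : w < n) (huv : u ≠ v)
    (hr : u ≡ v [MOD 2 * q + 1]) (hsplit : u ≡ v [MOD 2 ^ (t + 1)]) (hwu : w ≡ u [MOD 2 ^ t])
    (hwt : w.testBit t ≠ u.testBit t) :
    q ≤ triPts ((range n).image (hortonPt n)) (hortonPt n u) (hortonPt n v) (hortonPt n w) := by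
  wlog h : u < v generalizing u v
  · have htv : u.testBit t = v.testBit t := (Nat.modEq_two_pow_succ_iff.1 hsplit).2
    rw [triPts_swap]
    exact this hv hu huv.symm hr.symm hsplit.symm
      (hwu.trans (Nat.modEq_two_pow_succ_iff.1 hsplit).1) (htv ▸ hwt) (by omega)
  obtain ⟨t', m, hv_eq, hm, htt', hqm⟩ :=
    Nat.exists_eq_add_two_pow_mul_odd h (odd_two_mul_add_one q) hsplit hr
  have hshift : ∀ s, u + 2 ^ t' * s ≡ u [MOD 2 ^ t'] := fun s => by simp [Nat.ModEq]
  -- the parity of `s = 2 * x + c` makes bit `t'` of `u + 2 ^ t' * s` equal to bit `t` of `w`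
  set c := if u.testBit t' = w.testBit t then 2 else 1 with hc
  let l : ℕ → ℕ := fun x => u + 2 ^ t' * (2 * x + c)
  have hl_mem : ∀ x < q, hortonPt n (l x) ∈ ((range n).image (hortonPt n)).filter
      (· ∈ interior (convexHull ℝ {hortonPt n u, hortonPt n v, hortonPt n w})) := by
    intro x hx
    have hc2 : 1 ≤ c ∧ c ≤ 2 := by grind
    have hsm : 2 * x + c < m := by omega
    have hlv : l x < v := by
      rw [hv_eq]; exact Nat.add_lt_add_left (Nat.mul_lt_mul_of_pos_left hsm (Nat.two_pow_pos t')) u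
    refine mem_filter.2 ⟨mem_image_of_mem _ (mem_range.2 (hlv.trans hv)), ?_⟩
    refine hortonPt_mem_interior ?_ hlv hv hw htt' hwu hwt (hv_eq ▸ hshift m) ?_ (hshift _) ?_
    · exact Nat.lt_add_of_pos_right (Nat.mul_pos (Nat.two_pow_pos t') (by omega))
    · rw [hv_eq, Nat.testBit_add_two_pow_mul]; simp [hm]
    · rw [Nat.testBit_add_two_pow_mul]
      by_cases h : u.testBit t' = w.testBit t <;> simp [hc, h, Nat.odd_add] <;> grind
  have hl_inj : Set.InjOn (hortonPt n ∘ l) (range q) := fun x _ y _ hxy => by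
    have := hortonPt_injective n hxy
    simp only [l, Nat.add_left_cancel_iff, mul_eq_mul_left_iff] at this
    grind
  calc q = ((range q).image (hortonPt n ∘ l)).card := by rw [card_image_of_injOn hl_inj, card_range]
    _ ≤ triPts _ _ _ _ := card_le_card fun p hp => by
        obtain ⟨x, hx, rfl⟩ := mem_image.1 hp
        exact hl_mem x (mem_range.1 hx)

lemma le_triPts_of_modEq {q n A B C : ℕ} (hA : A < n) (hB : B < n) (hC : C < n) (hAB : A ≠ B)
    (hBC : B ≠ C) (hCA : C ≠ A) (hABr : A ≡ B [MOD 2 * q + 1]) (hBCr : B ≡ C [MOD 2 * q + 1]) :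
    q ≤ triPts ((range n).image (hortonPt n)) (hortonPt n A) (hortonPt n B) (hortonPt n C) := by
  obtain ⟨u, v, w, τ, hrot, huv, hwu, hwτ⟩ := exists_rotation_split (C := C) hAB
  rcases hrot with ⟨rfl, rfl, rfl⟩ | ⟨rfl, rfl, rfl⟩ | ⟨rfl, rfl, rfl⟩
  · exact le_triPts_of_split hA hB hC hAB hABr huv hwu hwτ
  · rw [triPts_rotate]; exact le_triPts_of_split hB hC hA hBC hBCr huv hwu hwτ
  · rw [← triPts_rotate]
    exact le_triPts_of_split hC hA hB hCA (hABr.trans hBCr).symm huv hwu hwτ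

lemma genPos_hortonSet (n : ℕ) : GenPos ((range n).image (hortonPt n) : Set (ℝ × ℝ)) := by
  simp only [GenPos, coe_image, coe_range, Set.forall_mem_image, Set.mem_Iio]
  intro A hA B hB C hC hAB hAC hBC
  exact not_collinear_of_orient_ne_zero (orient_hortonPt_ne_zero hA hB hC (ne_of_apply_ne _ hAB)
    (ne_of_apply_ne _ hBC) (ne_of_apply_ne _ hAC).symm)

end Horton

open Horton

theorem horton_coloring_lower_general (q : ℕ) (n : ℕ) :
    ∃ S : Finset (ℝ × ℝ), S.card = n ∧ GenPos (S : Set (ℝ × ℝ)) ∧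
      ∃ χ : ℝ × ℝ → Fin (2 * q + 1),
        ∀ a ∈ S, ∀ b ∈ S, ∀ d ∈ S, a ≠ b → a ≠ d → b ≠ d →
          χ a = χ b → χ b = χ d → q ≤ triPts S a b d := by
  refine ⟨(range n).image (hortonPt n), by rw [card_image_of_injective _ (hortonPt_injective n),
    card_range], genPos_hortonSet n, fun z => Fin.ofNat _ ⌊z.1⌋.toNat, ?_⟩
  simp only [mem_image, mem_range, forall_exists_index, and_imp, forall_apply_eq_imp_iff₂]
  intro A hA B hB C hC hAB hAC hBC hχAB hχBC
  simp only [hortonPt, Int.floor_natCast, Int.toNat_natCast, Fin.ext_iff, Fin.val_ofNat]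
    at hχAB hχBC
  exact le_triPts_of_modEq hA hB hC (ne_of_apply_ne _ hAB) (ne_of_apply_ne _ hBC)
    (ne_of_apply_ne _ hAC).symm hχAB hχBC

/-- For every `q ≥ 1` and every `n`, there is a `(2q+1)`-colored set of `n` points in
general position in which every monochromatic triangle has at least `q` interior points. -/
theorem horton_coloring_lower (q : ℕ) (hq : 1 ≤ q) (n : ℕ) :
    ∃ S : Finset (ℝ × ℝ), S.card = n ∧ GenPos (S : Set (ℝ × ℝ)) ∧
      ∃ χ : ℝ × ℝ → Fin (2 * q + 1),
        ∀ a ∈ S, ∀ b ∈ S, ∀ d ∈ S, a ≠ b → a ≠ d → b ≠ d →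
          χ a = χ b → χ b = χ d → q ≤ triPts S a b d :=
  horton_coloring_lower_general q n
end
end

section
/- For every c ≥ 2 and every n, there exists a set of n points in the plane in general position and a c-coloring of it such that every monochromatic triangle contains at least ⌊(c−1)/2⌋ points of the set in its interior. Consequently M_3(c, s) = ∞ for all s < ⌊(c−1)/2⌋. -/
open scoped Classical

noncomputable section

/-!
Take `p i = (i, ∑ t, dₜ(i) εᵗ)` for `i < n`, where `dₜ(i)` is the `t`-th binary digit of `i` and
`ε = 1 / (2n + 2)`, so that low digits dominate the height (a Horton-type set). The orientation of
`p a, p b, p w` is a power series in `ε` whose `t`-th coefficient is the orientation of the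
`0/1` digit triangle at level `t`; hence its sign is read off at the first level `s` where the
digits of `a, b, w` are not all equal, which gives general position.

Colour `p i` by `i mod c'`, with `c' = 2⌊(c-1)/2⌋ + 1` odd. In a monochromatic triangle two
vertices `P < Q` share their digits up to level `s`, so `Q - P = 2^σ M` with `σ > s`, `M` odd and
`c' ∣ M`. Among the points `P + t 2^σ`, `0 < t < M`, the `(M - 1)/2` whose `σ`-th digit equals
the `s`-th digit of the third vertex lie inside the triangle.
-/

namespace HortonSet

open Finset

def orient {R : Type*} [CommRing R] (A B C : R × R) : R :=
  (B.1 - A.1) * (C.2 - A.2) - (B.2 - A.2) * (C.1 - A.1)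

section Orientation

variable {R : Type*} [CommRing R] (A B C : R × R)

lemma orient_swap : orient B A C = -orient A B C := by
  simp only [orient]; ring

lemma orient_rotate : orient B C A = orient A B C := by
  simp only [orient]; ring

end Orientation

lemma orient_eq_zero_of_collinear {A B C : ℝ × ℝ} (h : Collinear ℝ ({A, B, C} : Set (ℝ × ℝ))) :
    orient A B C = 0 := by
  obtain ⟨v, hv⟩ := (collinear_iff_of_mem (Set.mem_insert A _)).mp h
  obtain ⟨tB, rfl⟩ := hv B (by simp)
  obtain ⟨tC, rfl⟩ := hv C (by simp)
  simp only [orient, vadd_eq_add, Prod.fst_add, Prod.snd_add, Prod.smul_fst, Prod.smul_snd,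
    smul_eq_mul]
  ring

lemma mem_interior_convexHull_of_orient_pos {A B C z : ℝ × ℝ} (hAB : 0 < orient A B z)
    (hBC : 0 < orient B C z) (hCA : 0 < orient C A z) :
    z ∈ interior (convexHull ℝ ({A, B, C} : Set (ℝ × ℝ))) := by
  have hopen : IsOpen {x | 0 < orient A B x ∧ 0 < orient B C x ∧ 0 < orient C A x} := by
    refine .and ?_ (.and ?_ ?_) <;> exact isOpen_lt continuous_const (by unfold orient; fun_prop)
  refine interior_maximal ?_ hopen ⟨hAB, hBC, hCA⟩
  rintro x ⟨h₁, h₂, h₃⟩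
  -- the three orientations are the barycentric coordinates of `x`, scaled by `orient A B C`
  set W := orient A B C
  have hW : orient B C x + orient C A x + orient A B x = W := by simp only [W, orient]; ring
  have hWpos : 0 < W := by linarith
  have hx : x = ∑ i : Fin 3,
      ![orient B C x / W, orient C A x / W, orient A B x / W] i • ![A, B, C] i := by
    simp only [Fin.sum_univ_three, Matrix.cons_val_zero, Matrix.cons_val_one, Matrix.cons_val_two,
      Matrix.head_cons, Matrix.tail_cons]
    ext <;> simp only [Prod.fst_add, Prod.snd_add, Prod.smul_fst, Prod.smul_snd, smul_eq_mul] <;>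
      field_simp <;> simp only [W, orient] <;> ring
  rw [hx]
  refine (convex_convexHull ℝ _).sum_mem (fun i _ => ?_) ?_ (fun i _ => subset_convexHull ℝ _ ?_)
  · fin_cases i <;> simp <;> positivity
  · simp only [Fin.sum_univ_three, Matrix.cons_val_zero, Matrix.cons_val_one, Matrix.cons_val_two,
      Matrix.head_cons, Matrix.tail_cons]
    field_simp; linarith
  · fin_cases i <;> simp

lemma mem_interior_convexHull_of_sign_orient {A B C z : ℝ × ℝ} {δ : SignType} (hδ : δ ≠ 0)
    (hAB : SignType.sign (orient A B z) = δ) (hBC : SignType.sign (orient B C z) = δ)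
    (hCA : SignType.sign (orient C A z) = δ) :
    z ∈ interior (convexHull ℝ ({A, B, C} : Set (ℝ × ℝ))) := by
  rcases δ with _ | _ | _
  · exact absurd rfl hδ
  · rw [SignType.neg_eq_neg_one, sign_eq_neg_one_iff] at hAB hBC hCA
    rw [Set.insert_comm]
    refine mem_interior_convexHull_of_orient_pos ?_ ?_ ?_ <;>
      linarith [orient_swap A B z, orient_swap C A z, orient_swap B C z]
  · rw [SignType.pos_eq_one, sign_eq_one_iff] at hAB hBC hCA
    exact mem_interior_convexHull_of_orient_pos hAB hBC hCA

lemma sign_eq_sign_of_mul_pos {α : Type*} [Ring α] [LinearOrder α] [IsStrictOrderedRing α]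
    {x y : α} (h : 0 < x * y) : SignType.sign x = SignType.sign y := by
  rcases pos_and_pos_or_neg_and_neg_of_mul_pos h with ⟨hx, hy⟩ | ⟨hx, hy⟩
  · rw [sign_pos hx, sign_pos hy]
  · rw [sign_neg hx, sign_neg hy]

lemma sign_sum_mul_pow_eq_sign {f : ℕ → ℤ} {K ε : ℝ} {s B : ℕ} (hε : 0 < ε)
    (hKε : (K + 1) * ε < 1) (hf : ∀ t, |(f t : ℝ)| ≤ K) (hsB : s < B)
    (hbelow : ∀ t < s, f t = 0) (hs : f s ≠ 0) :
    SignType.sign (∑ t ∈ range B, (f t : ℝ) * ε ^ t) = SignType.sign (f s) := by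
  have hsplit : ∑ t ∈ range B, (f t : ℝ) * ε ^ t
      = f s * ε ^ s + ∑ t ∈ Ico (s + 1) B, (f t : ℝ) * ε ^ t := by
    rw [range_eq_Ico, ← sum_Ico_consecutive _ (Nat.zero_le s) hsB.le,
      sum_eq_sum_Ico_succ_bot hsB, sum_eq_zero fun t ht => by simp [hbelow t (mem_Ico.1 ht).2]]
    ring
  have hK : 0 ≤ K := (abs_nonneg _).trans (hf 0)
  have htail : |∑ t ∈ Ico (s + 1) B, (f t : ℝ) * ε ^ t| < ε ^ s :=
    calc |∑ t ∈ Ico (s + 1) B, (f t : ℝ) * ε ^ t|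
        ≤ ∑ t ∈ Ico (s + 1) B, K * ε ^ t := by
          refine (abs_sum_le_sum_abs _ _).trans (sum_le_sum fun t _ => ?_)
          rw [abs_mul, abs_of_pos (pow_pos hε t)]
          exact mul_le_mul_of_nonneg_right (hf t) (pow_pos hε t).le
      _ ≤ K * (ε ^ (s + 1) / (1 - ε)) := by
          rw [← mul_sum]
          exact mul_le_mul_of_nonneg_left (geom_sum_Ico_le_of_lt_one hε.le (by nlinarith)) hK
      _ < ε ^ s := by
          rw [mul_div_assoc', div_lt_iff₀ (by nlinarith), pow_succ]
          nlinarith [pow_pos hε s]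
  rw [hsplit, ← sign_intCast (α := ℝ)]
  have hpow := pow_pos hε s
  rcases hs.lt_or_gt with hneg | hpos
  · have : (f s : ℝ) ≤ -1 := by exact_mod_cast Int.le_sub_one_of_lt hneg
    rw [sign_neg (by nlinarith [abs_lt.1 htail]), sign_neg (by exact_mod_cast hneg)]
  · have : (1 : ℝ) ≤ f s := by exact_mod_cast hpos
    rw [sign_pos (by nlinarith [abs_lt.1 htail]), sign_pos (by exact_mod_cast hpos)]

def binDigit (t i : ℕ) : ℕ := i / 2 ^ t % 2

lemma binDigit_lt_two (t i : ℕ) : binDigit t i < 2 := Nat.mod_lt _ two_pos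

lemma binDigit_eq_zero_or_one (t i : ℕ) : binDigit t i = 0 ∨ binDigit t i = 1 :=
  Nat.mod_two_eq_zero_or_one _

lemma binDigit_add_mul_pow (P k σ : ℕ) : binDigit σ (P + k * 2 ^ σ) = (P / 2 ^ σ + k) % 2 := by
  rw [binDigit, Nat.add_mul_div_right _ _ (by positivity)]

lemma binDigit_eq_of_modEq {a b s t : ℕ} (h : a ≡ b [MOD 2 ^ s]) (ht : t < s) :
    binDigit t a = binDigit t b := by
  have h' : a ≡ b [MOD 2 ^ t * 2] := h.of_dvd (by rw [← pow_succ]; exact Nat.pow_dvd_pow 2 ht)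
  rw [binDigit, binDigit, ← Nat.mod_mul_right_div_self, ← Nat.mod_mul_right_div_self, h']

lemma modEq_pow_succ_of_binDigit_eq {a b s : ℕ} (h : a ≡ b [MOD 2 ^ s])
    (hs : binDigit s a = binDigit s b) : a ≡ b [MOD 2 ^ (s + 1)] := by
  unfold Nat.ModEq at h ⊢
  rw [Nat.mod_pow_succ, Nat.mod_pow_succ, h]
  exact congrArg _ (congrArg _ hs)

lemma exists_modEq_pow_two_and_not_modEq {a b w : ℕ} (haw : a ≠ w) : ∃ s,
    (a ≡ w [MOD 2 ^ s] ∧ b ≡ w [MOD 2 ^ s]) ∧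
      ¬(a ≡ w [MOD 2 ^ (s + 1)] ∧ b ≡ w [MOD 2 ^ (s + 1)]) := by
  have hex : ∃ m, ¬(a ≡ w [MOD 2 ^ m] ∧ b ≡ w [MOD 2 ^ m]) := by
    refine ⟨a + w, fun h => haw (Nat.ModEq.eq_of_lt_of_lt h.1 ?_ ?_)⟩ <;>
      exact Nat.lt_two_pow_self.trans_le (Nat.pow_le_pow_right two_pos (by omega))
  obtain ⟨s, hs⟩ : ∃ s, Nat.find hex = s + 1 :=
    Nat.exists_eq_add_one.2 (Nat.pos_of_ne_zero fun h0 => Nat.find_spec hex (by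
      rw [h0, pow_zero]; exact ⟨Nat.modEq_one, Nat.modEq_one⟩))
  exact ⟨s, not_not.1 (Nat.find_min hex (by omega)), hs ▸ Nat.find_spec hex⟩

def hortonPt (n i : ℕ) : ℝ × ℝ :=
  (i, ∑ t ∈ range n, (binDigit t i : ℝ) * (2 * n + 2 : ℝ)⁻¹ ^ t)

def hortonSet (n : ℕ) : Finset (ℝ × ℝ) := (range n).image (hortonPt n)

lemma mem_hortonSet {n : ℕ} {p : ℝ × ℝ} : p ∈ hortonSet n ↔ ∃ i < n, hortonPt n i = p := by
  simp [hortonSet]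

def digitPt (t i : ℕ) : ℤ × ℤ := (i, binDigit t i)

lemma hortonPt_injective (n : ℕ) : Function.Injective (hortonPt n) :=
  fun a b h => by simpa [hortonPt] using congrArg Prod.fst h

lemma orient_hortonPt (n a b w : ℕ) :
    orient (hortonPt n a) (hortonPt n b) (hortonPt n w) = ∑ t ∈ range n,
      ((orient (digitPt t a) (digitPt t b) (digitPt t w) : ℤ) : ℝ) * (2 * n + 2 : ℝ)⁻¹ ^ t := by
  simp only [orient, hortonPt, digitPt, ← sum_sub_distrib, mul_sum, sum_mul]
  refine sum_congr rfl fun t _ => ?_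
  push_cast
  ring

lemma abs_orient_digitPt_le {n a b w : ℕ} (ha : a < n) (hb : b < n) (hw : w < n) (t : ℕ) :
    |orient (digitPt t a) (digitPt t b) (digitPt t w)| ≤ 2 * n := by
  simp only [orient, digitPt, abs_le]
  rcases binDigit_eq_zero_or_one t a with h₁ | h₁ <;>
    rcases binDigit_eq_zero_or_one t b with h₂ | h₂ <;>
    rcases binDigit_eq_zero_or_one t w with h₃ | h₃ <;>
    · simp only [h₁, h₂, h₃]; push_cast; constructor <;> omega

lemma orient_digitPt_ne_zero {a b w s : ℕ} (hab : a ≠ b) (haw : a ≠ w) (hbw : b ≠ w)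
    (h : ¬(binDigit s a = binDigit s w ∧ binDigit s b = binDigit s w)) :
    orient (digitPt s a) (digitPt s b) (digitPt s w) ≠ 0 := by
  simp only [orient, digitPt]
  rcases binDigit_eq_zero_or_one s a with h₁ | h₁ <;>
    rcases binDigit_eq_zero_or_one s b with h₂ | h₂ <;>
    rcases binDigit_eq_zero_or_one s w with h₃ | h₃ <;>
    · rw [h₁, h₂, h₃] at h ⊢; push_cast; omega

lemma sign_orient_digitPt_of_lt_of_lt {P Q z t : ℕ} (hPz : P < z) (hzQ : z < Q)
    (hPQ : binDigit t P ≠ binDigit t Q) :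
    SignType.sign (orient (digitPt t P) (digitPt t Q) (digitPt t z)) =
      SignType.sign (2 * (binDigit t z : ℤ) - 1) := by
  apply sign_eq_sign_of_mul_pos
  simp only [orient, digitPt]
  rcases binDigit_eq_zero_or_one t P with h₁ | h₁ <;>
    rcases binDigit_eq_zero_or_one t Q with h₂ | h₂ <;>
    rcases binDigit_eq_zero_or_one t z with h₃ | h₃ <;>
    simp only [h₁, h₂, h₃] at hPQ ⊢ <;> push_cast <;> omega

lemma sign_orient_digitPt_of_binDigit_eq {a b w t : ℕ} (hab : a < b)
    (h : binDigit t a = binDigit t b) (hw : binDigit t w ≠ binDigit t a) :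
    SignType.sign (orient (digitPt t a) (digitPt t b) (digitPt t w)) =
      SignType.sign (2 * (binDigit t w : ℤ) - 1) := by
  apply sign_eq_sign_of_mul_pos
  simp only [orient, digitPt]
  rcases binDigit_eq_zero_or_one t a with h₁ | h₁ <;>
    rcases binDigit_eq_zero_or_one t b with h₂ | h₂ <;>
    rcases binDigit_eq_zero_or_one t w with h₃ | h₃ <;>
    simp only [h₁, h₂, h₃] at h hw ⊢ <;> push_cast <;> omega

lemma sign_orient_hortonPt {n a b w s : ℕ} (ha : a < n) (hb : b < n) (hw : w < n) (hs : s < n)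
    (haw : a ≡ w [MOD 2 ^ s]) (hbw : b ≡ w [MOD 2 ^ s])
    (h : orient (digitPt s a) (digitPt s b) (digitPt s w) ≠ 0) :
    SignType.sign (orient (hortonPt n a) (hortonPt n b) (hortonPt n w)) =
      SignType.sign (orient (digitPt s a) (digitPt s b) (digitPt s w)) := by
  rw [orient_hortonPt]
  refine sign_sum_mul_pow_eq_sign (K := 2 * n) (ε := (2 * n + 2 : ℝ)⁻¹) (by positivity) ?_
    (fun t => by exact_mod_cast abs_orient_digitPt_le ha hb hw t) hs (fun t ht => ?_) h
  · rw [← div_eq_mul_inv, div_lt_one (by positivity)]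
    linarith
  · simp only [orient, digitPt, binDigit_eq_of_modEq haw ht, binDigit_eq_of_modEq hbw ht]
    ring

lemma not_collinear_hortonPt {n a b w : ℕ} (ha : a < n) (hb : b < n) (hw : w < n)
    (hab : a ≠ b) (haw : a ≠ w) (hbw : b ≠ w) :
    ¬Collinear ℝ ({hortonPt n a, hortonPt n b, hortonPt n w} : Set (ℝ × ℝ)) := by
  obtain ⟨s, ⟨has, hbs⟩, hsucc⟩ := exists_modEq_pow_two_and_not_modEq (b := b) haw
  have hne : orient (digitPt s a) (digitPt s b) (digitPt s w) ≠ 0 :=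
    orient_digitPt_ne_zero hab haw hbw fun h =>
      hsucc ⟨modEq_pow_succ_of_binDigit_eq has h.1, modEq_pow_succ_of_binDigit_eq hbs h.2⟩
  have hsn : s < n := by
    by_contra! hns
    have hlt : ∀ i < n, i < 2 ^ s := fun i hi =>
      hi.trans (Nat.lt_two_pow_self.trans_le (Nat.pow_le_pow_right two_pos hns))
    exact haw (Nat.ModEq.eq_of_lt_of_lt has (hlt a ha) (hlt w hw))
  intro hcol
  have hsign := sign_orient_hortonPt ha hb hw hsn has hbs hne
  rw [orient_eq_zero_of_collinear hcol, sign_zero] at hsign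
  exact hne (sign_eq_zero_iff.1 hsign.symm)

lemma genPos_hortonSet (n : ℕ) : GenPos (hortonSet n : Set (ℝ × ℝ)) := by
  rintro _ hp _ hq _ hr hpq hpr hqr
  obtain ⟨a, ha, rfl⟩ := mem_hortonSet.1 hp
  obtain ⟨b, hb, rfl⟩ := mem_hortonSet.1 hq
  obtain ⟨w, hw, rfl⟩ := mem_hortonSet.1 hr
  exact not_collinear_hortonPt ha hb hw (ne_of_apply_ne _ hpq) (ne_of_apply_ne _ hpr)
    (ne_of_apply_ne _ hqr)

lemma triPts_swap_left (S : Finset (ℝ × ℝ)) (a b d : ℝ × ℝ) :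
    triPts S a b d = triPts S b a d := by
  rw [triPts, triPts, Set.insert_comm]

lemma triPts_swap_right (S : Finset (ℝ × ℝ)) (a b d : ℝ × ℝ) :
    triPts S a b d = triPts S a d b := by
  rw [triPts, triPts, Set.pair_comm]

lemma hortonPt_mem_interior {n P Q R z s σ : ℕ} (hPz : P < z) (hzQ : z < Q) (hQn : Q < n)
    (hRn : R < n) (hsσ : s < σ) (hσn : σ < n) (hQP : Q ≡ P [MOD 2 ^ σ])
    (hPQσ : binDigit σ P ≠ binDigit σ Q) (hzP : z ≡ P [MOD 2 ^ σ])
    (hzσ : binDigit σ z = binDigit s R) (hRP : R ≡ P [MOD 2 ^ s])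
    (hRs : binDigit s R ≠ binDigit s P) :
    hortonPt n z ∈ interior (convexHull ℝ
      ({hortonPt n P, hortonPt n Q, hortonPt n R} : Set (ℝ × ℝ))) := by
  have hPn : P < n := by omega
  have hzn : z < n := by omega
  have hdvd : 2 ^ s ∣ 2 ^ σ := Nat.pow_dvd_pow 2 hsσ.le
  have hQs : binDigit s Q = binDigit s P := binDigit_eq_of_modEq hQP hsσ
  have hzs : binDigit s z = binDigit s P := binDigit_eq_of_modEq hzP hsσ
  set δ := SignType.sign (2 * (binDigit s R : ℤ) - 1)
  have hδ : δ ≠ 0 := sign_ne_zero.2 (by omega)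
  have hPQz : SignType.sign (orient (digitPt σ P) (digitPt σ Q) (digitPt σ z)) = δ := by
    rw [sign_orient_digitPt_of_lt_of_lt hPz hzQ hPQσ, hzσ]
  have hQRz : SignType.sign (orient (digitPt s Q) (digitPt s R) (digitPt s z)) = δ := by
    rw [orient_rotate, sign_orient_digitPt_of_binDigit_eq hzQ (hzs.trans hQs.symm) (hzs ▸ hRs)]
  have hRPz : SignType.sign (orient (digitPt s R) (digitPt s P) (digitPt s z)) = δ := by
    rw [← orient_rotate, sign_orient_digitPt_of_binDigit_eq hPz hzs.symm hRs]
  refine mem_interior_convexHull_of_sign_orient hδ ?_ ?_ ?_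
  · rw [sign_orient_hortonPt hPn hQn hzn hσn hzP.symm (hQP.trans hzP.symm)
      (sign_ne_zero.1 (hPQz ▸ hδ)), hPQz]
  · rw [sign_orient_hortonPt hQn hRn hzn (hsσ.trans hσn) ((hQP.trans hzP.symm).of_dvd hdvd)
      (hRP.trans (hzP.symm.of_dvd hdvd)) (sign_ne_zero.1 (hQRz ▸ hδ)), hQRz]
  · rw [sign_orient_hortonPt hRn hPn hzn (hsσ.trans hσn) (hRP.trans (hzP.symm.of_dvd hdvd))
      (hzP.symm.of_dvd hdvd) (sign_ne_zero.1 (hRPz ▸ hδ)), hRPz]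

lemma le_triPts_hortonSet_of_sub_eq {n P Q R s σ M : ℕ} (hPQ : P < Q) (hQn : Q < n)
    (hRn : R < n) (hsσ : s < σ) (hM : Q - P = 2 ^ σ * M) (hModd : M % 2 = 1)
    (hRP : R ≡ P [MOD 2 ^ s]) (hRs : binDigit s R ≠ binDigit s P) :
    (M - 1) / 2 ≤ triPts (hortonSet n) (hortonPt n P) (hortonPt n Q) (hortonPt n R) := by
  have hpow : 0 < 2 ^ σ := by positivity
  have hQ : Q = P + M * 2 ^ σ := by rw [mul_comm]; omega
  have hσn : σ < n := by
    have : 2 ^ σ ≤ M * 2 ^ σ := Nat.le_mul_of_pos_left _ (by omega)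
    have := Nat.lt_two_pow_self (n := σ)
    omega
  -- the parity offset `e` makes the `σ`-th digit of each candidate equal to the `s`-th digit of `R`
  set e := (binDigit s R + P / 2 ^ σ + 1) % 2
  have hzQ : ∀ u < (M - 1) / 2, P + (2 * u + 1 + e) * 2 ^ σ < Q := fun u hu => by
    have : (2 * u + 1 + e) * 2 ^ σ < M * 2 ^ σ := Nat.mul_lt_mul_of_pos_right (by omega) hpow
    omega
  refine le_card_of_inj_on_range (fun u => hortonPt n (P + (2 * u + 1 + e) * 2 ^ σ))
    (fun u hu => mem_filter.2 ⟨mem_hortonSet.2 ⟨_, (hzQ u hu).trans hQn, rfl⟩, ?_⟩)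
    fun u _ v _ huv => ?_
  · refine hortonPt_mem_interior (Nat.lt_add_of_pos_right (by positivity)) (hzQ u hu) hQn hRn
      hsσ hσn (by rw [hQ]; exact Nat.add_mul_mod_self_right _ _ _) ?_
      (Nat.add_mul_mod_self_right _ _ _) ?_ hRP hRs
    · rw [hQ, binDigit, binDigit_add_mul_pow]
      omega
    · rw [binDigit_add_mul_pow]
      have := binDigit_lt_two s R
      omega
  · have := Nat.eq_of_mul_eq_mul_right hpow (Nat.add_left_cancel (hortonPt_injective n huv))
    omega

lemma le_triPts_hortonSet_of_pair {n c P Q R s : ℕ} (hc : c % 2 = 1) (hPn : P < n)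
    (hQn : Q < n) (hRn : R < n) (hPQ : P ≠ Q) (hPQc : P ≡ Q [MOD c])
    (hPQs : P ≡ Q [MOD 2 ^ (s + 1)]) (hRP : R ≡ P [MOD 2 ^ s]) (hRs : binDigit s R ≠ binDigit s P) :
    (c - 1) / 2 ≤ triPts (hortonSet n) (hortonPt n P) (hortonPt n Q) (hortonPt n R) := by
  wlog hlt : P < Q generalizing P Q
  · rw [triPts_swap_left]
    refine this hQn hPn hPQ.symm hPQc.symm hPQs.symm
      (hRP.trans (hPQs.of_dvd (Nat.pow_dvd_pow 2 s.le_succ))) ?_ (by omega)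
    rwa [← binDigit_eq_of_modEq hPQs s.lt_succ_self]
  obtain ⟨σ, M, hM2, hM⟩ :=
    Nat.exists_eq_pow_mul_and_not_dvd (n := Q - P) (by omega) 2 (by norm_num)
  have hModd : M % 2 = 1 := Nat.two_dvd_ne_zero.1 hM2
  have hsσ : s < σ := by
    have hdvd : 2 ^ (s + 1) ∣ 2 ^ σ * M := hM ▸ (Nat.modEq_iff_dvd' hlt.le).1 hPQs
    have hcop : Nat.Coprime (2 ^ (s + 1)) M :=
      (Nat.coprime_two_left.2 (Nat.odd_iff.2 hModd)).pow_left _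
    exact (Nat.pow_dvd_pow_iff_le_right one_lt_two).1 (hcop.dvd_of_dvd_mul_right hdvd)
  have hcM : c ≤ M := by
    have hdvd : c ∣ 2 ^ σ * M := hM ▸ (Nat.modEq_iff_dvd' hlt.le).1 hPQc
    have hcop : Nat.Coprime c (2 ^ σ) := (Nat.coprime_two_right.2 (Nat.odd_iff.2 hc)).pow_right _
    exact Nat.le_of_dvd (by omega) (hcop.dvd_of_dvd_mul_left hdvd)
  calc (c - 1) / 2 ≤ (M - 1) / 2 := by omega
    _ ≤ _ := le_triPts_hortonSet_of_sub_eq hlt hQn hRn hsσ hM hModd hRP hRs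

lemma le_triPts_hortonSet {n c a b d : ℕ} (hc : c % 2 = 1) (ha : a < n) (hb : b < n)
    (hd : d < n) (hab : a ≠ b) (had : a ≠ d) (hbd : b ≠ d) (habc : a ≡ b [MOD c])
    (hbdc : b ≡ d [MOD c]) :
    (c - 1) / 2 ≤ triPts (hortonSet n) (hortonPt n a) (hortonPt n b) (hortonPt n d) := by
  obtain ⟨s, ⟨has, hbs⟩, hsucc⟩ := exists_modEq_pow_two_and_not_modEq (b := b) had
  by_cases h₁ : binDigit s a = binDigit s b
  · have hds : binDigit s d ≠ binDigit s a := fun h => hsucc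
      ⟨modEq_pow_succ_of_binDigit_eq has h.symm, modEq_pow_succ_of_binDigit_eq hbs (h₁ ▸ h).symm⟩
    exact le_triPts_hortonSet_of_pair hc ha hb hd hab habc
      (modEq_pow_succ_of_binDigit_eq (has.trans hbs.symm) h₁) has.symm hds
  by_cases h₂ : binDigit s a = binDigit s d
  · rw [triPts_swap_right]
    exact le_triPts_hortonSet_of_pair hc ha hd hb had (habc.trans hbdc)
      (modEq_pow_succ_of_binDigit_eq has h₂) (hbs.trans has.symm) (Ne.symm h₁)
  · rw [triPts_swap_left, triPts_swap_right]
    have h₃ : binDigit s b = binDigit s d := by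
      have := binDigit_lt_two s a; have := binDigit_lt_two s b; have := binDigit_lt_two s d
      omega
    exact le_triPts_hortonSet_of_pair hc hb hd ha hbd hbdc
      (modEq_pow_succ_of_binDigit_eq hbs h₃) (has.trans hbs.symm) h₁

lemma exists_coloring_le_triPts {c : ℕ} (hc : 1 ≤ c) (n : ℕ) :
    ∃ S : Finset (ℝ × ℝ), S.card = n ∧ GenPos (S : Set (ℝ × ℝ)) ∧
      ∃ χ : ℝ × ℝ → Fin c,
        ∀ a ∈ S, ∀ b ∈ S, ∀ d ∈ S, a ≠ b → a ≠ d → b ≠ d →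
          χ a = χ b → χ b = χ d → (c - 1) / 2 ≤ triPts S a b d := by
  set c' := 2 * ((c - 1) / 2) + 1
  refine ⟨hortonSet n, by rw [hortonSet, card_image_of_injective _ (hortonPt_injective n),
    card_range], genPos_hortonSet n,
    fun p => ⟨⌊p.1⌋₊ % c', (Nat.mod_lt _ (by omega)).trans_le (by omega)⟩, ?_⟩
  simp only [mem_hortonSet]
  rintro _ ⟨a, ha, rfl⟩ _ ⟨b, hb, rfl⟩ _ ⟨d, hd, rfl⟩ hab had hbd habc hbdc
  simp only [hortonPt, Nat.floor_natCast, Fin.mk.injEq] at habc hbdc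
  have := le_triPts_hortonSet (by omega) ha hb hd (ne_of_apply_ne _ hab) (ne_of_apply_ne _ had)
    (ne_of_apply_ne _ hbd) habc hbdc
  omega

end HortonSet

/-- For every `c ≥ 2` and every `n` there is a `c`-colored set of `n` points in general
position in which every monochromatic triangle has at least `⌊(c−1)/2⌋` interior points.
Consequently, for every `s < ⌊(c−1)/2⌋` there is no finite `N` such that every
`c`-colored set of at least `N` points in general position contains a monochromatic
triangle with at most `s` interior points (i.e. `M₃(c, s) = ∞`). -/
theorem lower_bound_floor (c : ℕ) (hc : 2 ≤ c) :
    (∀ n : ℕ, ∃ S : Finset (ℝ × ℝ), S.card = n ∧ GenPos (S : Set (ℝ × ℝ)) ∧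
      ∃ χ : ℝ × ℝ → Fin c,
        ∀ a ∈ S, ∀ b ∈ S, ∀ d ∈ S, a ≠ b → a ≠ d → b ≠ d →
          χ a = χ b → χ b = χ d → (c - 1) / 2 ≤ triPts S a b d) ∧
    (∀ s : ℕ, s < (c - 1) / 2 →
      ¬ ∃ N : ℕ, ∀ S : Finset (ℝ × ℝ), ∀ χ : ℝ × ℝ → Fin c,
          N ≤ S.card → GenPos (S : Set (ℝ × ℝ)) → MonoTriangle S χ s) := by
  have hcol := HortonSet.exists_coloring_le_triPts (by omega : 1 ≤ c)
  refine ⟨hcol, fun s hs ⟨N, hN⟩ => ?_⟩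
  obtain ⟨S, hcard, hgen, χ, hχ⟩ := hcol N
  obtain ⟨a, ha, b, hb, d, hd, hab, had, hbd, h₁, h₂, hle⟩ := hN S χ hcard.ge hgen
  have := hχ a ha b hb d hd hab had hbd h₁ h₂
  omega
end
end

section
/- Let H be a Horton set with even part H⁺ and odd part H⁻ (in x-order). If h_a <_x h_b are two consecutive points of H⁻ (i.e., their indices in H differ by 2), and h_c is any point of H⁺, then the triangle h_a h_b h_c contains no point of H in its interior. -/
open scoped Classical

noncomputable section

/-! An interior point of a triangle lies strictly inside every closed half-plane containing the
triangle, so `p` is not interior once some line through `p` and the vertex `c` has `a` and `b`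
weakly on one side. If `p ∈ H⁺`, the line `pc` joins two points of `H⁺`, so `a` and `b` lie below
it. If `p ∈ H⁻`, the Horton condition puts `c` above the lines `pa` and `pb`, which places `a` and
`b` on the same side of `pc` unless `p` lies strictly between them in x-order; this is impossible
because `a` and `b` are consecutive in `H⁻`. -/

theorem notMem_interior_convexHull_of_forall_le {E : Type*} [AddCommGroup E] [Module ℝ E]
    [TopologicalSpace E] [IsTopologicalAddGroup E] [ContinuousSMul ℝ E]
    {f : E →L[ℝ] ℝ} (hf : f ≠ 0) {s : Set E} {p : E} (hs : ∀ x ∈ s, f p ≤ f x) :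
    p ∉ interior (convexHull ℝ s) := by
  have hopen : IsOpenMap f := (f : E →ₗ[ℝ] ℝ).isOpenMap_of_finiteDimensional
    (LinearMap.surjective (ContinuousLinearMap.coe_injective.ne hf))
  have hhull : convexHull ℝ s ⊆ f ⁻¹' Set.Ici (f p) :=
    convexHull_min hs ((convex_Ici _).linear_preimage (f : E →ₗ[ℝ] ℝ))
  intro hp
  have hpos : p ∈ f ⁻¹' Set.Ioi (f p) := by
    rw [← interior_Ici, hopen.preimage_interior_eq_interior_preimage f.continuous]
    exact interior_mono hhull hp
  exact lt_irrefl (f p) hpos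

/-- Twice the signed area of the triangle `u v w`: positive iff `w` lies to the left of the
directed line `u → v`. -/
def cross (u v w : ℝ × ℝ) : ℝ :=
  (v.1 - u.1) * (w.2 - u.2) - (v.2 - u.2) * (w.1 - u.1)

section Cross

variable {u v w : ℝ × ℝ}

@[simp]
theorem cross_self_left (u v : ℝ × ℝ) : cross u v u = 0 := by
  unfold cross; ring

@[simp]
theorem cross_self_right (u v : ℝ × ℝ) : cross u v v = 0 := by
  unfold cross; ring

theorem cross_rotate (u v w : ℝ × ℝ) : cross u v w = cross v w u := by
  unfold cross; ring

theorem cross_swap_left (u v w : ℝ × ℝ) : cross v u w = -cross u v w := by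
  unfold cross; ring

theorem cross_swap_right (u v w : ℝ × ℝ) : cross u w v = -cross u v w := by
  unfold cross; ring

theorem aboveLine_iff_cross_pos (h : u.1 < v.1) : AboveLine u v w ↔ 0 < cross u v w := by
  have hd : 0 < v.1 - u.1 := sub_pos.2 h
  rw [AboveLine, div_mul_eq_mul_div, ← lt_sub_iff_add_lt', div_lt_iff₀ hd, cross]
  constructor <;> intro h <;> linarith

theorem belowLine_iff_cross_neg (h : u.1 < v.1) : BelowLine u v w ↔ cross u v w < 0 := by
  have hd : 0 < v.1 - u.1 := sub_pos.2 h
  rw [BelowLine, div_mul_eq_mul_div, ← sub_lt_iff_lt_add', lt_div_iff₀ hd, cross]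
  constructor <;> intro h <;> linarith

end Cross

theorem notMem_interior_convexHull_of_cross_nonneg {u v p : ℝ × ℝ} {s : Set (ℝ × ℝ)}
    (huv : u ≠ v) (hs : ∀ x ∈ s, 0 ≤ cross u v x) (hp : cross u v p ≤ 0) :
    p ∉ interior (convexHull ℝ s) := by
  set f : ℝ × ℝ →L[ℝ] ℝ :=
    (v.1 - u.1) • ContinuousLinearMap.snd ℝ ℝ ℝ - (v.2 - u.2) • ContinuousLinearMap.fst ℝ ℝ ℝ
  have hf : ∀ w, cross u v w = f w - f u := fun w => by
    simp only [cross, f, sub_apply, smul_apply, ContinuousLinearMap.coe_snd',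
      ContinuousLinearMap.coe_fst', smul_eq_mul]
    ring
  have hf0 : f ≠ 0 := by
    intro h0
    have h10 := congrArg (· ((1, 0) : ℝ × ℝ)) h0
    have h01 := congrArg (· ((0, 1) : ℝ × ℝ)) h0
    simp only [f, sub_apply, smul_apply, ContinuousLinearMap.coe_fst',
      ContinuousLinearMap.coe_snd', smul_eq_mul, zero_apply] at h10 h01
    exact huv (Prod.ext (by linarith) (by linarith))
  refine notMem_interior_convexHull_of_forall_le hf0 fun x hx => ?_
  linarith [hs x hx, hf x, hf p]

section Triangle

variable {a b c p : ℝ × ℝ}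

theorem notMem_interior_triangle_of_mul_nonneg (hpc : p ≠ c)
    (h : 0 ≤ cross p c a * cross p c b) : p ∉ interior (convexHull ℝ ({a, b, c} : Set _)) := by
  rcases mul_nonneg_iff.1 h with ⟨ha, hb⟩ | ⟨ha, hb⟩
  · refine notMem_interior_convexHull_of_cross_nonneg hpc ?_ (cross_self_left p c).le
    simp only [Set.mem_insert_iff, Set.mem_singleton_iff, forall_eq_or_imp, forall_eq]
    exact ⟨ha, hb, (cross_self_right p c).ge⟩
  · refine notMem_interior_convexHull_of_cross_nonneg hpc.symm ?_ (cross_self_right c p).le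
    simp only [Set.mem_insert_iff, Set.mem_singleton_iff, forall_eq_or_imp, forall_eq,
      cross_swap_left p c, cross_self_right, neg_zero]
    exact ⟨neg_nonneg.2 ha, neg_nonneg.2 hb, le_rfl⟩

theorem notMem_interior_triangle_right (hca : c ≠ a) :
    c ∉ interior (convexHull ℝ ({a, b, c} : Set _)) := by
  rw [Set.insert_comm, Set.pair_comm, Set.insert_comm]
  exact notMem_interior_triangle_of_mul_nonneg hca (by simp)

end Triangle

theorem everyOther_cons (a : ℝ × ℝ) (l : List (ℝ × ℝ)) :
    everyOther (a :: l) = a :: everyOther l.tail := by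
  cases l <;> rfl

theorem length_everyOther : ∀ l : List (ℝ × ℝ), (everyOther l).length = (l.length + 1) / 2
  | [] | [_] => by simp [everyOther]
  | _ :: _ :: l => by
    simp only [everyOther, List.length_cons, length_everyOther l]
    omega

theorem mem_everyOther_or_mem_everyOther_tail {p : ℝ × ℝ} :
    ∀ {l : List (ℝ × ℝ)}, p ∈ l → p ∈ everyOther l ∨ p ∈ everyOther l.tail
  | a :: l, hp => by
    rw [everyOther_cons, List.tail_cons]
    rcases List.mem_cons.1 hp with rfl | hl
    · exact Or.inl List.mem_cons_self
    · exact (mem_everyOther_or_mem_everyOther_tail hl).symm.imp (List.mem_cons_of_mem a) id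

namespace SortedX

variable {l : List (ℝ × ℝ)} {p q : ℝ × ℝ}

theorem fst_lt (hs : SortedX l) {i j : ℕ} (hi : l[i]? = some p) (hj : l[j]? = some q)
    (hij : i < j) : p.1 < q.1 := by
  obtain ⟨hi', rfl⟩ := List.getElem?_eq_some_iff.1 hi
  obtain ⟨hj', rfl⟩ := List.getElem?_eq_some_iff.1 hj
  exact List.pairwise_iff_getElem.1 hs i j hi' hj' hij

theorem fst_ne (hs : SortedX l) (hp : p ∈ l) (hq : q ∈ l) (hpq : p ≠ q) : p.1 ≠ q.1 := by
  obtain ⟨i, hi⟩ := List.mem_iff_getElem?.1 hp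
  obtain ⟨j, hj⟩ := List.mem_iff_getElem?.1 hq
  rcases lt_trichotomy i j with h | rfl | h
  · exact (hs.fst_lt hi hj h).ne
  · exact absurd (Option.some_injective _ (hi.symm.trans hj)) hpq
  · exact (hs.fst_lt hj hi h).ne'

theorem lt_or_eq_or_eq_or_gt_of_consecutive (hs : SortedX l) {k : ℕ} {a b : ℝ × ℝ}
    (ha : l[k]? = some a) (hb : l[k + 1]? = some b) (hp : p ∈ l) :
    p.1 < a.1 ∨ p = a ∨ p = b ∨ b.1 < p.1 := by
  obtain ⟨i, hi⟩ := List.mem_iff_getElem?.1 hp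
  rcases lt_trichotomy i k with h | rfl | h
  · exact Or.inl (hs.fst_lt hi ha h)
  · exact Or.inr (Or.inl (Option.some_injective _ (hi.symm.trans ha)))
  rcases (Nat.succ_le_of_lt h).eq_or_lt with rfl | h
  · exact Or.inr (Or.inr (Or.inl (Option.some_injective _ (hi.symm.trans hb))))
  · exact Or.inr (Or.inr (Or.inr (hs.fst_lt hb hi h)))

end SortedX

theorem IsHorton.sortedX {l : List (ℝ × ℝ)} : IsHorton l → SortedX l
  | .small _ _ hs => hs
  | .step _ hs .. => hs

section Separated

variable {L U : List (ℝ × ℝ)} {a b c p : ℝ × ℝ}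

theorem cross_pos_of_mem_lower_of_mem_upper
    (hLU : ∀ u ∈ L, ∀ v ∈ L, u ≠ v → ∀ w ∈ U, AboveLine u v w)
    (ha : a ∈ L) (hb : b ∈ L) (hc : c ∈ U) (hab : a.1 < b.1) : 0 < cross a b c :=
  (aboveLine_iff_cross_pos hab).1 (hLU a ha b hb (ne_of_apply_ne Prod.fst hab.ne) c hc)

theorem mul_cross_nonneg_of_mem_lower (hL : SortedX L)
    (hLU : ∀ u ∈ L, ∀ v ∈ L, u ≠ v → ∀ w ∈ U, AboveLine u v w) {k : ℕ}
    (ha : L[k]? = some a) (hb : L[k + 1]? = some b) (hc : c ∈ U) (hp : p ∈ L) :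
    0 ≤ cross p c a * cross p c b := by
  have hamem := List.mem_of_getElem? ha
  have hbmem := List.mem_of_getElem? hb
  have hab : a.1 < b.1 := hL.fst_lt ha hb k.lt_succ_self
  have hleft : ∀ x ∈ L, p.1 < x.1 → cross p c x < 0 := fun x hx hpx => by
    rw [cross_swap_right, neg_neg_iff_pos]
    exact cross_pos_of_mem_lower_of_mem_upper hLU hp hx hc hpx
  have hright : ∀ x ∈ L, x.1 < p.1 → 0 < cross p c x := fun x hx hxp => by
    rw [← cross_rotate]
    exact cross_pos_of_mem_lower_of_mem_upper hLU hx hp hc hxp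
  rcases hL.lt_or_eq_or_eq_or_gt_of_consecutive ha hb hp with hpa | rfl | rfl | hbp
  · exact (mul_pos_of_neg_of_neg (hleft a hamem hpa) (hleft b hbmem (hpa.trans hab))).le
  · simp
  · simp
  · exact (mul_pos (hright a hamem (hab.trans hbp)) (hright b hbmem hbp)).le

theorem mul_cross_pos_of_mem_upper (hU : SortedX U)
    (hUL : ∀ u ∈ U, ∀ v ∈ U, u ≠ v → ∀ w ∈ L, BelowLine u v w)
    (ha : a ∈ L) (hb : b ∈ L) (hc : c ∈ U) (hp : p ∈ U) (hpc : p ≠ c) :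
    0 < cross p c a * cross p c b := by
  rcases (hU.fst_ne hp hc hpc).lt_or_gt with hpc' | hcp
  · have hbelow := fun x hx => (belowLine_iff_cross_neg hpc').1 (hUL p hp c hc hpc x hx)
    exact mul_pos_of_neg_of_neg (hbelow a ha) (hbelow b hb)
  · have hbelow := fun x hx => (belowLine_iff_cross_neg hcp).1 (hUL c hc p hp hpc.symm x hx)
    rw [cross_swap_left c p, cross_swap_left c p, neg_mul_neg]
    exact mul_pos_of_neg_of_neg (hbelow a ha) (hbelow b hb)

end Separated

/-- If `a` and `b` are consecutive points of the odd part `H⁻ = everyOther l` of a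
Horton set `l` (their indices in `l` differ by 2), and `c` is any point of the even
part `H⁺ = everyOther l.tail`, then the triangle `a b c` contains no point of `l`
in its interior. -/
theorem horton_consecutive_empty (l : List (ℝ × ℝ)) (hH : IsHorton l)
    (a b c : ℝ × ℝ) (k : ℕ)
    (ha : (everyOther l)[k]? = some a) (hb : (everyOther l)[k + 1]? = some b)
    (hc : c ∈ everyOther l.tail) :
    ∀ p ∈ l, p ∉ interior (convexHull ℝ ({a, b, c} : Set (ℝ × ℝ))) := by
  intro p hp
  cases hH with
  | small _ hlen _ =>
    have hlt := (List.getElem?_eq_some_iff.1 hb).1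
    rw [length_everyOther] at hlt
    omega
  | step _ _ _ hodd heven hbelow habove =>
    rcases eq_or_ne p c with rfl | hpc
    · have hcab := cross_pos_of_mem_lower_of_mem_upper habove (List.mem_of_getElem? ha)
        (List.mem_of_getElem? hb) hc (hodd.sortedX.fst_lt ha hb k.lt_succ_self)
      exact notMem_interior_triangle_right fun hca => hcab.ne' (by simp [hca])
    refine notMem_interior_triangle_of_mul_nonneg hpc ?_
    rcases mem_everyOther_or_mem_everyOther_tail hp with hpo | hpe
    · exact mul_cross_nonneg_of_mem_lower hodd.sortedX habove ha hb hc hpo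
    · exact (mul_cross_pos_of_mem_upper heven.sortedX hbelow (List.mem_of_getElem? ha)
        (List.mem_of_getElem? hb) hc hpe hpc).le
end
end
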